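/- arXiv:2102.11619 — 8 statements merged into one kernel-verified Lean document; each statement's English description precedes it below -/
import Mathlib

section
/- Let P be a population protocol and b ∈ {0,1}. The set S_b of b-stable configurations is downward closed: if C ∈ S_b and C' is a configuration with C' ≤ C (componentwise), then C' ∈ S_b. -/
/-- A population protocol `(Q, T, L, X, I, O)`: `T` is a finite set of transitions, each a pair
of size-2 multisets over the states `Q`, such that every size-2 multiset is the left-hand side
of some transition; `L` is the leader multiset, `I` the input mapping and `O` the output
mapping. -/
structure PopulationProtocol (Q X : Type) where
  T : Finset (Multiset Q × Multiset Q)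
  pre_card : ∀ t ∈ T, Multiset.card t.1 = 2
  post_card : ∀ t ∈ T, Multiset.card t.2 = 2
  total : ∀ p q : Q, ∃ t ∈ T, t.1 = {p, q}
  L : Multiset Q
  I : X → Q
  O : Q → Bool

namespace PopulationProtocol

variable {Q X : Type} [DecidableEq Q]

/-- A configuration is a multiset of states with at least two elements. -/
def IsConfig (C : Multiset Q) : Prop := 2 ≤ Multiset.card C

/-- One step: some transition `t` enabled at `C` (i.e. `t.1 ≤ C`) fires. -/
def Step (P : PopulationProtocol Q X) (C C' : Multiset Q) : Prop :=
  ∃ t ∈ P.T, t.1 ≤ C ∧ C' = C - t.1 + t.2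

/-- Reachability `C →* C'` via a finite sequence of transitions. -/
def Reach (P : PopulationProtocol Q X) : Multiset Q → Multiset Q → Prop :=
  Relation.ReflTransGen P.Step

/-- Firing a given transition `t`. -/
def StepT (P : PopulationProtocol Q X) (t : Multiset Q × Multiset Q)
    (C C' : Multiset Q) : Prop :=
  t ∈ P.T ∧ t.1 ≤ C ∧ C' = C - t.1 + t.2

/-- `C →σ C'`: successive firing of the transitions in the finite sequence `σ`. -/
def FireSeq (P : PopulationProtocol Q X) :
    List (Multiset Q × Multiset Q) → Multiset Q → Multiset Q → Prop
  | [], C, C' => C' = C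
  | t :: σ, C, C' => ∃ D, P.StepT t C D ∧ P.FireSeq σ D C'

/-- The output of a configuration is `b` if all states populated by it have output `b`. -/
def Output (P : PopulationProtocol Q X) (C : Multiset Q) (b : Bool) : Prop :=
  ∀ q ∈ C, P.O q = b

/-- A configuration is `b`-stable if every configuration reachable from it has output `b`. -/
def Stable (P : PopulationProtocol Q X) (b : Bool) (C : Multiset Q) : Prop :=
  IsConfig C ∧ ∀ C', P.Reach C C' → P.Output C' b

/-- The set `S = S₀ ∪ S₁` of stable configurations. -/
def StableSet (P : PopulationProtocol Q X) (C : Multiset Q) : Prop :=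
  P.Stable false C ∨ P.Stable true C

/-- The initial configuration `IC(v) = L + Σ_x v(x)·I(x)` for an input `v`. -/
def IC [Fintype X] (P : PopulationProtocol Q X) (v : X → ℕ) : Multiset Q :=
  P.L + ∑ x : X, Multiset.replicate (v x) (P.I x)

/-- An execution: an infinite sequence of configurations, each step firing a transition. -/
def IsExecution (P : PopulationProtocol Q X) (σ : ℕ → Multiset Q) : Prop :=
  ∀ i, P.Step (σ i) (σ (i + 1))

/-- Fairness: a configuration reachable from infinitely many `σ i` occurs infinitely often. -/
def Fair (P : PopulationProtocol Q X) (σ : ℕ → Multiset Q) : Prop :=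
  ∀ C : Multiset Q, (∀ N, ∃ i, N ≤ i ∧ P.Reach (σ i) C) → ∀ N, ∃ i, N ≤ i ∧ σ i = C

/-- The output of an execution is `b` if from some index on every configuration has output `b`. -/
def OutputOf (P : PopulationProtocol Q X) (σ : ℕ → Multiset Q) (b : Bool) : Prop :=
  ∃ N, ∀ i, N ≤ i → P.Output (σ i) b

/-- The protocol computes `φ` if for every input `v` (of size at least 2) every fair execution
from `IC(v)` has output `φ(v)`. -/
def Computes [Fintype X] (P : PopulationProtocol Q X) (φ : (X → ℕ) → Bool) : Prop :=
  ∀ v : X → ℕ, 2 ≤ ∑ x : X, v x →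
    ∀ σ : ℕ → Multiset Q, P.IsExecution σ → P.Fair σ → σ 0 = P.IC v → P.OutputOf σ (φ v)

/-- `(B, S)` is a basis element of a set `𝒞` of configurations if `B + ℕ^S ⊆ 𝒞`. -/
def IsBasisElement (𝒞 : Multiset Q → Prop) (B : Multiset Q) (S : Finset Q) : Prop :=
  ∀ D : Multiset Q, (∀ q ∈ D, q ∈ S) → 𝒞 (B + D)

/-- A (finite) basis of a set `𝒞` of configurations: `𝒞 = ⋃_{(B,S)∈ℬ} (B + ℕ^S)`. -/
def IsBasis (𝒞 : Multiset Q → Prop) (ℬ : Finset (Multiset Q × Finset Q)) : Prop :=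
  ∀ C : Multiset Q, 𝒞 C ↔ ∃ p ∈ ℬ, ∃ D : Multiset Q, (∀ q ∈ D, q ∈ p.2) ∧ C = p.1 + D

/-- `‖B‖∞`, the maximal multiplicity of a state in `B`. -/
def normInf [Fintype Q] (B : Multiset Q) : ℕ := Finset.univ.sup fun q => B.count q

/-- The displacement `Δ(t) = p' + q' − p − q ∈ ℤ^Q` of a transition `t = (p,q ↦ p',q')`. -/
def displ (t : Multiset Q × Multiset Q) (q : Q) : ℤ :=
  (Multiset.count q t.2 : ℤ) - (Multiset.count q t.1 : ℤ)

/-- The displacement of a multiset `π` of transitions. -/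
def displM (π : Multiset (Multiset Q × Multiset Q)) (q : Q) : ℤ :=
  (π.map fun t => displ t q).sum

/-- `C' = C + Δ(π)` (as vectors in `ℤ^Q`). -/
def AddDispl (C : Multiset Q) (π : Multiset (Multiset Q × Multiset Q))
    (C' : Multiset Q) : Prop :=
  ∀ q : Q, (Multiset.count q C' : ℤ) = (Multiset.count q C : ℤ) + displM π q

/-- A multiset `π ∈ ℕ^T` of transitions is potentially realisable if `IC(i) + Δ(π) ∈ ℕ^Q`
for some input `i`. (Leaderless, single input variable.) -/
def PotReal (P : PopulationProtocol Q Unit)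
    (π : Multiset (Multiset Q × Multiset Q)) : Prop :=
  (∀ t ∈ π, t ∈ P.T) ∧ ∃ i : ℕ, ∃ C : Multiset Q, AddDispl (P.IC fun _ => i) π C

/-- A configuration is `j`-saturated if every state is populated by at least `j` agents. -/
def Saturated (j : ℕ) (C : Multiset Q) : Prop := ∀ q : Q, j ≤ Multiset.count q C

/-- `C` is `(1/k)`-concentrated in `S`: `k·C(Q∖S) ≤ |C|`. -/
def ConcInv (k : ℕ) (S : Finset Q) (C : Multiset Q) : Prop :=
  k * Multiset.card (C.filter fun q => q ∉ S) ≤ Multiset.card C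

end PopulationProtocol

open PopulationProtocol


private lemma reach_add {Q X : Type} [DecidableEq Q] (P : PopulationProtocol Q X)
    (E : Multiset Q) {C D : Multiset Q} (h : P.Reach C D) : P.Reach (C + E) (D + E) := by
  induction h with
  | refl => exact Relation.ReflTransGen.refl
  | @tail M N _ hstep ih =>
    refine ih.tail ?_
    obtain ⟨t, ht, hle, heq⟩ := hstep
    refine ⟨t, ht, le_trans hle (Multiset.le_add_right _ _), ?_⟩
    subst heq
    have h2 : (M + E) - t.1 = M - t.1 + E := by
      ext q
      simp [Multiset.count_sub, Multiset.count_add,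
        Nat.sub_add_comm (Multiset.le_iff_count.mp hle q)]
    rw [h2, add_right_comm]

/-- the set of `b`-stable configurations is downward closed. -/
theorem stable_downward_closed {Q X : Type} [DecidableEq Q] (P : PopulationProtocol Q X)
    (b : Bool) (C C' : Multiset Q) (hC : P.Stable b C) (hC' : IsConfig C') (hle : C' ≤ C) :
    P.Stable b C' := by
  obtain ⟨hCconf, hCout⟩ := hC
  refine ⟨hC', fun D hD => ?_⟩
  have h1 : C = C' + (C - C') := by rw [add_comm]; exact (tsub_add_cancel_of_le hle).symm
  have h2 := reach_add P (C - C') hD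
  rw [← h1] at h2
  intro q hq
  exact hCout _ h2 q (Multiset.mem_of_le (Multiset.le_add_right _ _) hq)
end

section
/- Let P be a population protocol with n states. Each of the downward closed sets S_0, S_1 and S = S_0 ∪ S_1 has a basis of norm at most 2^{2(2n+1)!+1} containing at most 2^{(2n+2)!} elements. -/
namespace SBproof
open PopulationProtocol

variable {Q X : Type} [DecidableEq Q]

def pre (t : Multiset Q × Multiset Q) (q : Q) : ℤ := t.1.count q
def post (t : Multiset Q × Multiset Q) (q : Q) : ℤ := t.2.count q
def app (v : Q → ℤ) (t : Multiset Q × Multiset Q) : Q → ℤ :=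
  fun q => v q - pre t q + post t q

def endv : (Q → ℤ) → List (Multiset Q × Multiset Q) → (Q → ℤ)
  | v, [] => v
  | v, t :: L => endv (app v t) L

def Valid (P : PopulationProtocol Q X) (S : Finset Q) :
    (Q → ℤ) → List (Multiset Q × Multiset Q) → Prop
  | _, [] => True
  | v, t :: L => t ∈ P.T ∧ (∀ q ∈ S, pre t q ≤ v q) ∧ Valid P S (app v t) L

variable {P : PopulationProtocol Q X}

lemma pre_nonneg (t : Multiset Q × Multiset Q) (q : Q) : 0 ≤ pre t q := Int.ofNat_nonneg _
lemma post_nonneg (t : Multiset Q × Multiset Q) (q : Q) : 0 ≤ post t q := Int.ofNat_nonneg _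

lemma pre_le_two {t : Multiset Q × Multiset Q} (ht : t ∈ P.T) (q : Q) : pre t q ≤ 2 := by
  have h := Multiset.count_le_card q t.1
  rw [P.pre_card t ht] at h
  unfold pre; exact_mod_cast h

lemma eff_bounds {t : Multiset Q × Multiset Q} (ht : t ∈ P.T) (q : Q) (v : Q → ℤ) :
    v q - 2 ≤ app v t q := by
  have h1 := pre_le_two ht q
  have h2 := post_nonneg t q
  simp only [app]; omega

lemma endv_append (L1 L2 : List (Multiset Q × Multiset Q)) (v : Q → ℤ) :
    endv v (L1 ++ L2) = endv (endv v L1) L2 := by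
  induction L1 generalizing v with
  | nil => rfl
  | cons t L ih => simp [endv, ih]

lemma valid_append {L1 L2 : List (Multiset Q × Multiset Q)} {v : Q → ℤ} {S : Finset Q} :
    Valid P S v (L1 ++ L2) ↔ Valid P S v L1 ∧ Valid P S (endv v L1) L2 := by
  induction L1 generalizing v with
  | nil => simp [Valid, endv]
  | cons t L ih => simp [Valid, endv, ih, and_assoc]

lemma endv_eq (v : Q → ℤ) (L : List (Multiset Q × Multiset Q)) (q : Q) :
    endv v L q = v q + (L.map fun t => post t q - pre t q).sum := by
  induction L generalizing v with
  | nil => simp [endv]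
  | cons t L ih => simp [endv, ih, app]; ring

lemma endv_agree {v v' : Q → ℤ} {S : Finset Q} (h : ∀ q ∈ S, v q = v' q)
    (L : List (Multiset Q × Multiset Q)) : ∀ q ∈ S, endv v L q = endv v' L q := by
  intro q hq
  rw [endv_eq, endv_eq, h q hq]

lemma valid_agree {v v' : Q → ℤ} {S : Finset Q} (h : ∀ q ∈ S, v q = v' q)
    {L : List (Multiset Q × Multiset Q)} (hv : Valid P S v L) : Valid P S v' L := by
  induction L generalizing v v' with
  | nil => trivial
  | cons t L ih =>
    obtain ⟨ht, hg, hrest⟩ := hv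
    refine ⟨ht, fun q hq => (h q hq) ▸ hg q hq, ih (fun q hq => by simp [app, h q hq]) hrest⟩

lemma valid_mono {S S' : Finset Q} (hss : S' ⊆ S) {v : Q → ℤ}
    {L : List (Multiset Q × Multiset Q)} (hv : Valid P S v L) : Valid P S' v L := by
  induction L generalizing v with
  | nil => trivial
  | cons t L ih =>
    obtain ⟨ht, hg, hrest⟩ := hv
    exact ⟨ht, fun q hq => hg q (hss hq), ih hrest⟩

lemma valid_nonneg {S : Finset Q} {v : Q → ℤ} {L : List (Multiset Q × Multiset Q)}
    (hv : Valid P S v L) (h0 : ∀ q ∈ S, 0 ≤ v q) : ∀ q ∈ S, 0 ≤ endv v L q := by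
  induction L generalizing v with
  | nil => exact h0
  | cons t L ih =>
    obtain ⟨ht, hg, hrest⟩ := hv
    refine ih hrest (fun q hq => ?_)
    have := hg q hq
    have := post_nonneg t q
    simp only [app]; omega

lemma endv_drift {v : Q → ℤ} {L : List (Multiset Q × Multiset Q)} {S : Finset Q}
    (hv : Valid P S v L) (q : Q) : v q - 2 * L.length ≤ endv v L q := by
  induction L generalizing v with
  | nil => simp [endv]
  | cons t L ih =>
    obtain ⟨ht, hg, hrest⟩ := hv
    have h1 := ih hrest
    have h2 := eff_bounds ht q v
    have := h1; simp only [endv, List.length_cons]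
    have h3 := ih hrest
    calc v q - 2 * (L.length + 1 : ℕ) ≤ app v t q - 2 * (L.length : ℕ) := by
          push_cast; omega
      _ ≤ endv (app v t) L q := h3

lemma valid_insert {S : Finset Q} {j : Q} {v : Q → ℤ} {L : List (Multiset Q × Multiset Q)}
    (hv : Valid P S v L) (hj : 2 + 2 * L.length ≤ v j) : Valid P (insert j S) v L := by
  induction L generalizing v with
  | nil => trivial
  | cons t L ih =>
    obtain ⟨ht, hg, hrest⟩ := hv
    refine ⟨ht, ?_, ?_⟩
    · intro q hq
      rcases Finset.mem_insert.mp hq with rfl | hq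
      · have := pre_le_two ht q; simp only [List.length_cons] at hj; push_cast at hj; omega
      · exact hg q hq
    · refine ih hrest ?_
      have h2 := eff_bounds ht j v
      simp only [List.length_cons] at hj; push_cast at hj ⊢; omega

end SBproof
namespace SBproof
variable {Q X : Type} [DecidableEq Q] {P : PopulationProtocol Q X}

def rf : ℕ → ℕ
  | 0 => 0
  | i+1 => (2 * rf i + 2) ^ (i+1) + rf i

theorem rackoff (P : PopulationProtocol Q X) (r : Q) : ∀ (i : ℕ) (S : Finset Q), S.card = i →
    ∀ v : Q → ℤ, (∀ q ∈ S, 0 ≤ v q) →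
    (∃ L, Valid P S v L ∧ (r ∈ S → 1 ≤ endv v L r)) →
    ∃ L, L.length ≤ rf i ∧ Valid P S v L ∧ (r ∈ S → 1 ≤ endv v L r) := by
  intro i
  induction i with
  | zero =>
    intro S hS v _ _
    rw [Finset.card_eq_zero] at hS
    subst hS
    exact ⟨[], by simp [rf], trivial, by simp⟩
  | succ i ih =>
    intro S hS v hv hex
    classical
    have hex' : ∃ m : ℕ, ∃ L, L.length = m ∧ Valid P S v L ∧ (r ∈ S → 1 ≤ endv v L r) := by
      obtain ⟨L, h1, h2⟩ := hex; exact ⟨L.length, L, rfl, h1, h2⟩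
    obtain ⟨L, hLlen, hLval, hLgoal⟩ := Nat.find_spec hex'
    have prefval : ∀ k : ℕ, Valid P S v (L.take k) := by
      intro k
      have h := hLval
      rw [← List.take_append_drop k L] at h
      exact (valid_append.mp h).1
    have wnn : ∀ k : ℕ, ∀ q ∈ S, 0 ≤ endv v (L.take k) q := fun k =>
      valid_nonneg (prefval k) hv
    have distinct : ∀ k l : ℕ, k < l → l ≤ L.length →
        ¬(∀ q ∈ S, endv v (L.take k) q = endv v (L.take l) q) := by
      intro k l hkl hlL heq
      set L' := L.take k ++ L.drop l with hL'
      have h2 : Valid P S (endv v (L.take l)) (L.drop l) := by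
        have h := hLval
        rw [← List.take_append_drop l L] at h
        exact (valid_append.mp h).2
      have hval' : Valid P S v L' :=
        valid_append.mpr ⟨prefval k, valid_agree (fun q hq => (heq q hq).symm) h2⟩
      have hgoal' : r ∈ S → 1 ≤ endv v L' r := by
        intro hr
        have hend : endv v L' r = endv v L r := by
          rw [hL', endv_append]
          rw [endv_agree heq (L.drop l) r hr]
          rw [← endv_append, List.take_append_drop]
        rw [hend]; exact hLgoal hr
      have hlen' : L'.length < L.length := by
        rw [hL', List.length_append, List.length_take, List.length_drop]
        omega
      rw [hLlen] at hlen'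
      exact Nat.find_min hex' hlen' ⟨L', rfl, hval', hgoal'⟩
    have pigeon : ∀ c : ℕ, c ≤ L.length + 1 →
        (∀ k < c, ∀ j ∈ S, endv v (L.take k) j < ((2 * rf i + 2 : ℕ) : ℤ)) →
        c ≤ (2 * rf i + 2) ^ (i+1) := by
      intro c hc hbd
      let g : Fin c → ({x // x ∈ S} → Fin (2 * rf i + 2)) := fun k j =>
        ⟨(endv v (L.take k) j.1).toNat, by
          have h1 := wnn k j.1 j.2
          have h2 := hbd k k.2 j.1 j.2
          omega⟩
      have hinj : Function.Injective g := by
        intro k l hkl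
        by_contra hne
        have hne' : (k : ℕ) ≠ (l : ℕ) := fun h => hne (Fin.ext h)
        have key : ∀ (a b : Fin c), (a:ℕ) < (b:ℕ) → g a = g b → False := by
          intro a b hab hg
          refine distinct a b hab (by omega) (fun q hq => ?_)
          have := congrFun hg ⟨q, hq⟩
          have h1 := wnn a q hq
          have h2 := wnn b q hq
          have h3 : (endv v (L.take a) q).toNat = (endv v (L.take b) q).toNat :=
            congrArg Fin.val this
          omega
        rcases Nat.lt_or_ge (k:ℕ) (l:ℕ) with h | h
        · exact key k l h hkl
        · exact key l k (by omega) hkl.symm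
      calc c = Fintype.card (Fin c) := (Fintype.card_fin c).symm
        _ ≤ Fintype.card ({x // x ∈ S} → Fin (2 * rf i + 2)) :=
            Fintype.card_le_of_injective g hinj
        _ = (2 * rf i + 2) ^ (i+1) := by
            rw [Fintype.card_fun, Fintype.card_fin, Fintype.card_coe, hS]
    by_cases hcase : ∃ k, k ≤ L.length ∧ ∃ j ∈ S, ((2 * rf i + 2 : ℕ) : ℤ) ≤ endv v (L.take k) j
    · -- unbounded case
      have hkmin : ∀ k' < Nat.find hcase, ∀ j' ∈ S,
          endv v (L.take k') j' < ((2 * rf i + 2 : ℕ) : ℤ) := by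
        intro k' hk' j' hj'
        by_contra hge
        push_neg at hge
        obtain ⟨hkle, _, _, _⟩ := Nat.find_spec hcase
        exact Nat.find_min hcase hk' ⟨by omega, j', hj', hge⟩
      obtain ⟨hkle, j, hjS, hjB⟩ := Nat.find_spec hcase
      set k := Nat.find hcase with hk
      have hk_le : k ≤ (2 * rf i + 2) ^ (i+1) := pigeon k (by omega) hkmin
      set w := endv v (L.take k) with hw
      set S' := S.erase j with hS'
      have hS'card : S'.card = i := by rw [hS', Finset.card_erase_of_mem hjS, hS]; rfl
      have hwnnS' : ∀ q ∈ S', 0 ≤ w q := fun q hq => wnn k q (Finset.mem_of_mem_erase hq)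
      have hsufval : Valid P S w (L.drop k) := by
        have h := hLval
        rw [← List.take_append_drop k L] at h
        exact (valid_append.mp h).2
      have hsufgoal : r ∈ S → 1 ≤ endv w (L.drop k) r := by
        intro hr
        have he : endv w (L.drop k) = endv v L := by
          rw [hw, ← endv_append, List.take_append_drop]
        rw [he]; exact hLgoal hr
      obtain ⟨L3, hL3len, hL3val, hL3goal⟩ := ih S' hS'card w hwnnS'
        ⟨L.drop k, valid_mono (Finset.erase_subset _ _) hsufval,
          fun hr => hsufgoal (Finset.mem_of_mem_erase hr)⟩
      have hwj : ((2 * rf i + 2 : ℕ) : ℤ) ≤ w j := hjB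
      have hvalS : Valid P S w L3 := by
        have h1 : Valid P (insert j S') w L3 := by
          refine valid_insert hL3val ?_
          push_cast at hwj ⊢
          omega
        rwa [hS', Finset.insert_erase hjS] at h1
      have hgoalS : r ∈ S → 1 ≤ endv w L3 r := by
        intro hr
        by_cases hrj : r = j
        · subst hrj
          have hd := endv_drift hvalS r
          push_cast at hwj
          omega
        · exact hL3goal (Finset.mem_erase.mpr ⟨hrj, hr⟩)
      refine ⟨L.take k ++ L3, ?_, valid_append.mpr ⟨prefval k, hvalS⟩, ?_⟩
      · rw [List.length_append, List.length_take]
        have hrf : rf (i+1) = (2 * rf i + 2) ^ (i+1) + rf i := rfl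
        omega
      · intro hr; rw [endv_append]; exact hgoalS hr
    · -- bounded case
      push_neg at hcase
      have hlen : L.length + 1 ≤ (2 * rf i + 2) ^ (i+1) :=
        pigeon (L.length + 1) le_rfl (fun k hk => hcase k (by omega))
      refine ⟨L, ?_, hLval, hLgoal⟩
      have hrf : rf (i+1) = (2 * rf i + 2) ^ (i+1) + rf i := rfl
      omega

end SBproof
namespace SBproof
open PopulationProtocol
variable {Q X : Type} [DecidableEq Q] {P : PopulationProtocol Q X}

def toVec (C : Multiset Q) : Q → ℤ := fun q => C.count q

lemma toVec_nonneg (C : Multiset Q) (q : Q) : 0 ≤ toVec C q := Int.ofNat_nonneg _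

lemma reach_valid [Fintype Q] {C D : Multiset Q} (h : P.Reach C D) :
    ∃ L, Valid P Finset.univ (toVec C) L ∧ ∀ q, endv (toVec C) L q = toVec D q := by
  induction h with
  | refl => exact ⟨[], trivial, fun q => rfl⟩
  | @tail D' D h1 h2 ih =>
    obtain ⟨L, hval, hend⟩ := ih
    obtain ⟨t, ht, hle, hD⟩ := h2
    have hcnt : ∀ q, t.1.count q ≤ D'.count q := fun q => Multiset.count_le_of_le q hle
    refine ⟨L ++ [t], valid_append.mpr ⟨hval, ?_⟩, ?_⟩
    · refine ⟨ht, fun q _ => ?_, trivial⟩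
      rw [hend q]
      have := hcnt q
      simp only [pre, toVec]
      exact_mod_cast this
    · intro q
      rw [endv_append]
      show app (endv (toVec C) L) t q = toVec D q
      simp only [app, hend q, toVec, pre, post, hD, Multiset.count_add, Multiset.count_sub]
      have := hcnt q
      push_cast
      omega

lemma valid_reach [Fintype Q] {C : Multiset Q} {L : List (Multiset Q × Multiset Q)}
    (h : Valid P Finset.univ (toVec C) L) :
    ∃ D, P.Reach C D ∧ ∀ q, toVec D q = endv (toVec C) L q := by
  induction L generalizing C with
  | nil => exact ⟨C, Relation.ReflTransGen.refl, fun q => rfl⟩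
  | cons t L ih =>
    obtain ⟨ht, hg, hrest⟩ := h
    have hle : t.1 ≤ C := by
      rw [Multiset.le_iff_count]
      intro q
      have := hg q (Finset.mem_univ q)
      simp only [pre, toVec] at this
      exact_mod_cast this
    have hcnt : ∀ q, t.1.count q ≤ C.count q := fun q => Multiset.count_le_of_le q hle
    have hagree : ∀ q ∈ (Finset.univ : Finset Q),
        app (toVec C) t q = toVec (C - t.1 + t.2) q := by
      intro q _
      simp only [app, toVec, pre, post, Multiset.count_add, Multiset.count_sub]
      have := hcnt q
      push_cast
      omega
    have hrest' : Valid P Finset.univ (toVec (C - t.1 + t.2)) L := valid_agree hagree hrest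
    obtain ⟨D, hreach, hend⟩ := ih hrest'
    refine ⟨D, Relation.ReflTransGen.head ⟨t, ht, hle, rfl⟩ hreach, fun q => ?_⟩
    show toVec D q = endv (app (toVec C) t) L q
    rw [hend q]
    exact (endv_agree hagree L q (Finset.mem_univ q)).symm

/-- `r` is coverable from `C`. -/
def Cov (P : PopulationProtocol Q X) (r : Q) (C : Multiset Q) : Prop :=
  ∃ D, P.Reach C D ∧ r ∈ D

lemma pump_cov [Fintype Q] {C : Multiset Q} {q r : Q}
    (hq : 2 * rf (Fintype.card Q) + 2 ≤ C.count q)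
    (h : Cov P r (q ::ₘ C)) : Cov P r C := by
  classical
  obtain ⟨D, hreach, hrD⟩ := h
  obtain ⟨L0, hval0, hend0⟩ := reach_valid hreach
  have hgoal0 : (r ∈ (Finset.univ : Finset Q)) → 1 ≤ endv (toVec (q ::ₘ C)) L0 r := by
    intro _
    rw [hend0 r]
    simp only [toVec]
    have : 1 ≤ D.count r := Multiset.one_le_count_iff_mem.mpr hrD
    exact_mod_cast this
  obtain ⟨L, hLlen, hLval, hLgoal⟩ := rackoff P r (Fintype.card Q) Finset.univ
    (by simp) (toVec (q ::ₘ C)) (fun x _ => toVec_nonneg _ x) ⟨L0, hval0, hgoal0⟩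
  -- pass from q ::ₘ C to C
  have hagree : ∀ x ∈ Finset.univ.erase q, toVec (q ::ₘ C) x = toVec C x := by
    intro x hx
    have hxq : x ≠ q := (Finset.mem_erase.mp hx).1
    simp [toVec, Multiset.count_cons, hxq]
  have hvq : toVec (q ::ₘ C) q = toVec C q + 1 := by
    simp [toVec, Multiset.count_cons]
  have hval1 : Valid P (Finset.univ.erase q) (toVec C) L :=
    valid_agree hagree (valid_mono (Finset.erase_subset _ _) hLval)
  have hval2 : Valid P Finset.univ (toVec C) L := by
    have h1 : Valid P (insert q (Finset.univ.erase q)) (toVec C) L := by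
      refine valid_insert hval1 ?_
      have hcq : (2 * rf (Fintype.card Q) + 2 : ℤ) ≤ toVec C q := by
        simp only [toVec]; exact_mod_cast hq
      have : (L.length : ℤ) ≤ rf (Fintype.card Q) := by exact_mod_cast hLlen
      omega
    rwa [Finset.insert_erase (Finset.mem_univ q)] at h1
  have hgoal2 : 1 ≤ endv (toVec C) L r := by
    by_cases hrq : r = q
    · subst hrq
      have hd := endv_drift hval2 r
      have hcq : (2 * rf (Fintype.card Q) + 2 : ℤ) ≤ toVec C r := by
        simp only [toVec]; exact_mod_cast hq
      have : (L.length : ℤ) ≤ rf (Fintype.card Q) := by exact_mod_cast hLlen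
      omega
    · have e1 : endv (toVec C) L r = endv (toVec (q ::ₘ C)) L r :=
        (endv_agree hagree L r (Finset.mem_erase.mpr ⟨hrq, Finset.mem_univ r⟩)).symm
      rw [e1]
      exact hLgoal (Finset.mem_univ r)
  obtain ⟨D', hreach', hend'⟩ := valid_reach hval2
  refine ⟨D', hreach', ?_⟩
  rw [← Multiset.one_le_count_iff_mem]
  have := hend' r
  simp only [toVec] at this
  omega

end SBproof
namespace SBproof
open PopulationProtocol
variable {Q X : Type} [DecidableEq Q] {P : PopulationProtocol Q X}

lemma reach_add {C D : Multiset Q} (h : P.Reach C D) (E : Multiset Q) :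
    P.Reach (C + E) (D + E) := by
  induction h with
  | refl => exact Relation.ReflTransGen.refl
  | @tail D' D h1 h2 ih =>
    obtain ⟨t, ht, hle, hD⟩ := h2
    refine Relation.ReflTransGen.tail ih ⟨t, ht, le_trans hle (Multiset.le_add_right _ _), ?_⟩
    have hcnt : ∀ q, t.1.count q ≤ D'.count q := fun q => Multiset.count_le_of_le q hle
    ext q
    simp only [hD, Multiset.count_add, Multiset.count_sub]
    have := hcnt q
    omega

lemma stable_mono {b : Bool} {C C' : Multiset Q} (h : P.Stable b C) (hle : C' ≤ C)
    (hconf : IsConfig C') : P.Stable b C' := by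
  refine ⟨hconf, fun D hD q hq => ?_⟩
  have h1 : P.Reach (C' + (C - C')) (D + (C - C')) := reach_add hD _
  rw [add_tsub_cancel_of_le hle] at h1
  exact h.2 _ h1 q (Multiset.mem_add.mpr (Or.inl hq))

lemma pump_stable [Fintype Q] {b : Bool} {C : Multiset Q} {q : Q}
    (h : P.Stable b C) (hq : 2 * rf (Fintype.card Q) + 2 ≤ C.count q) :
    P.Stable b (q ::ₘ C) := by
  refine ⟨?_, fun D hD => ?_⟩
  · have := h.1
    simp only [IsConfig, Multiset.card_cons] at *
    omega
  · by_contra hout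
    obtain ⟨r, hrD, hr⟩ : ∃ r ∈ D, P.O r ≠ b := by
      simpa [Output] using hout
    have hcov : Cov P r (q ::ₘ C) := ⟨D, hD, hrD⟩
    obtain ⟨D', hreach', hrD'⟩ := pump_cov hq hcov
    exact hr (h.2 D' hreach' r hrD')

def ofFn [Fintype Q] (m : Q → ℕ) : Multiset Q := ∑ q : Q, Multiset.replicate (m q) q

lemma count_ofFn [Fintype Q] (m : Q → ℕ) (a : Q) : (ofFn m).count a = m a := by
  rw [ofFn, Multiset.count_sum']
  rw [Finset.sum_congr rfl (fun q _ => Multiset.count_replicate a q (m q))]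
  simp

lemma rf_bound : ∀ i : ℕ, rf i + 1 ≤ 2 ^ (2 * (2 * i + 1).factorial) := by
  intro i
  induction i with
  | zero => simp [rf, Nat.factorial]
  | succ i ih =>
    have hF : 1 ≤ (2 * i + 1).factorial := Nat.factorial_pos _
    set E := 2 * (2 * i + 1).factorial with hE
    have h1 : 2 * rf i + 2 ≤ 2 ^ (E + 1) := by
      have : 2 * (rf i + 1) ≤ 2 * 2 ^ E := by omega
      calc 2 * rf i + 2 = 2 * (rf i + 1) := by ring
        _ ≤ 2 * 2 ^ E := this
        _ = 2 ^ (E + 1) := by ring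
    have h2 : (2 * rf i + 2) ^ (i + 1) ≤ 2 ^ ((E + 1) * (i + 1)) := by
      calc (2 * rf i + 2) ^ (i + 1) ≤ (2 ^ (E + 1)) ^ (i + 1) :=
            Nat.pow_le_pow_left h1 _
        _ = 2 ^ ((E + 1) * (i + 1)) := by rw [← pow_mul]
    have h3 : rf (i + 1) + 1 ≤ 2 ^ ((E + 1) * (i + 1) + 1) := by
      have hrf : rf (i + 1) = (2 * rf i + 2) ^ (i + 1) + rf i := rfl
      have h4 : 2 ^ E ≤ 2 ^ ((E + 1) * (i + 1)) :=
        Nat.pow_le_pow_right (by norm_num) (by nlinarith)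
      have h5 : 2 ^ ((E + 1) * (i + 1) + 1) = 2 ^ ((E + 1) * (i + 1)) + 2 ^ ((E + 1) * (i + 1)) := by ring
      omega
    refine le_trans h3 (Nat.pow_le_pow_right (by norm_num) ?_)
    -- (E+1)(i+1)+1 ≤ 2 * (2(i+1)+1)!
    have hfac : (2 * (i + 1) + 1).factorial
        = (2 * i + 3) * ((2 * i + 2) * (2 * i + 1).factorial) := by
      rw [show 2 * (i + 1) + 1 = (2 * i + 1) + 1 + 1 from by ring, Nat.factorial_succ,
        Nat.factorial_succ]
      try ring
    rw [hfac, hE]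
    nlinarith [hF, sq_nonneg i]

lemma needed_card_arith (n : ℕ) :
    (2 * rf n + 2 + 1) ^ n ≤ 2 ^ (2 * n + 2).factorial := by
  have h1 : 2 * rf n + 2 + 1 ≤ 2 ^ (2 * (2 * n + 1).factorial + 2) := by
    have := rf_bound n
    have h2 : 2 ^ (2 * (2 * n + 1).factorial + 2) = 4 * 2 ^ (2 * (2 * n + 1).factorial) := by ring
    omega
  calc (2 * rf n + 2 + 1) ^ n ≤ (2 ^ (2 * (2 * n + 1).factorial + 2)) ^ n :=
        Nat.pow_le_pow_left h1 _
    _ = 2 ^ ((2 * (2 * n + 1).factorial + 2) * n) := by rw [← pow_mul]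
    _ ≤ 2 ^ (2 * n + 2).factorial := by
        refine Nat.pow_le_pow_right (by norm_num) ?_
        have hfac : (2 * n + 2).factorial = (2 * n + 2) * (2 * n + 1).factorial := by
          have e : 2 * n + 2 = (2 * n + 1) + 1 := by ring
          rw [e, Nat.factorial_succ]
        rw [hfac]
        have hn : n ≤ (2 * n + 1).factorial :=
          le_trans (by omega) (Nat.self_le_factorial _)
        nlinarith
end SBproof
open PopulationProtocol

/-- each of `S₀`, `S₁` and `S = S₀ ∪ S₁` has a basis of norm at most
`2^(2(2n+1)!+1)` with at most `2^((2n+2)!)` elements, where `n` is the number of states. -/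
theorem small_bases {Q X : Type} [DecidableEq Q] [Fintype Q] (P : PopulationProtocol Q X)
    (n : ℕ) (hn : Fintype.card Q = n)
    (𝒞 : Multiset Q → Prop)
    (h𝒞 : 𝒞 = P.Stable false ∨ 𝒞 = P.Stable true ∨ 𝒞 = P.StableSet) :
    ∃ ℬ : Finset (Multiset Q × Finset Q), IsBasis 𝒞 ℬ ∧
      ℬ.card ≤ 2 ^ (2 * n + 2).factorial ∧
      ∀ p ∈ ℬ, normInf p.1 ≤ 2 ^ (2 * (2 * n + 1).factorial + 1) := by
  classical
  subst hn
  set N := 2 * SBproof.rf (Fintype.card Q) + 2 with hN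
  have hconf : ∀ C, 𝒞 C → IsConfig C := by
    rcases h𝒞 with h | h | h <;> subst h
    · exact fun C hC => hC.1
    · exact fun C hC => hC.1
    · rintro C (hC | hC) <;> exact hC.1
  have hdc : ∀ C C', 𝒞 C → C' ≤ C → IsConfig C' → 𝒞 C' := by
    rcases h𝒞 with h | h | h <;> subst h
    · exact fun C C' hC hle hcf => SBproof.stable_mono hC hle hcf
    · exact fun C C' hC hle hcf => SBproof.stable_mono hC hle hcf
    · rintro C C' (hC | hC) hle hcf
      · exact Or.inl (SBproof.stable_mono hC hle hcf)
      · exact Or.inr (SBproof.stable_mono hC hle hcf)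
  have hpump : ∀ C q, 𝒞 C → N ≤ C.count q → 𝒞 (q ::ₘ C) := by
    rcases h𝒞 with h | h | h <;> subst h
    · exact fun C q hC hq => SBproof.pump_stable hC hq
    · exact fun C q hC hq => SBproof.pump_stable hC hq
    · rintro C q (hC | hC) hq
      · exact Or.inl (SBproof.pump_stable hC hq)
      · exact Or.inr (SBproof.pump_stable hC hq)
  have hpumpD : ∀ (D B : Multiset Q), 𝒞 B → (∀ q ∈ D, N ≤ B.count q) → 𝒞 (B + D) := by
    intro D
    induction D using Multiset.induction_on with
    | empty => intro B hB _; simpa using hB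
    | cons a D ih =>
      intro B hB hsup
      have h1 : B + a ::ₘ D = a ::ₘ (B + D) := by
        ext q
        simp [Multiset.count_cons, Multiset.count_add]
      rw [h1]
      refine hpump (B + D) a (ih B hB fun q hq => hsup q (Multiset.mem_cons_of_mem hq)) ?_
      have h2 : N ≤ B.count a := hsup a (Multiset.mem_cons_self a D)
      have h3 : B.count a ≤ (B + D).count a := by
        rw [Multiset.count_add]; omega
      omega
  set caps : Finset (Multiset Q) :=
    (Finset.univ : Finset (Q → Fin (N + 1))).image
      (fun c => SBproof.ofFn fun q => (c q : ℕ)) with hcaps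
  set ℬ : Finset (Multiset Q × Finset Q) :=
    (caps.filter 𝒞).image
      (fun B => (B, Finset.univ.filter fun q => B.count q = N)) with hℬ
  have hNpos : 2 ≤ N := by omega
  refine ⟨ℬ, ?_, ?_, ?_⟩
  · intro C
    constructor
    · intro hC
      set B := SBproof.ofFn (fun q => min (C.count q) N) with hB
      have hcntB : ∀ q, B.count q = min (C.count q) N := fun q => SBproof.count_ofFn _ q
      have hBle : B ≤ C := Multiset.le_iff_count.mpr fun q => by rw [hcntB]; omega
      have hBconf : IsConfig B := by
        by_cases hbig : ∃ q, 2 ≤ C.count q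
        · obtain ⟨q, hq2⟩ := hbig
          have h2 : 2 ≤ B.count q := by rw [hcntB]; omega
          exact le_trans h2 (Multiset.count_le_card q B)
        · push_neg at hbig
          have hBC : B = C := Multiset.ext.mpr fun q => by
            rw [hcntB]; have := hbig q; omega
          rw [hBC]; exact hconf C hC
      have hB𝒞 : 𝒞 B := hdc C B hC hBle hBconf
      have hBcaps : B ∈ caps := Finset.mem_image.mpr
        ⟨fun q => (⟨min (C.count q) N, by omega⟩ : Fin (N + 1)), Finset.mem_univ _, rfl⟩
      refine ⟨(B, Finset.univ.filter fun q => B.count q = N),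
        Finset.mem_image.mpr ⟨B, Finset.mem_filter.mpr ⟨hBcaps, hB𝒞⟩, rfl⟩,
        C - B, ?_, ?_⟩
      · intro q hq
        have hq1 : 1 ≤ (C - B).count q := Multiset.one_le_count_iff_mem.mpr hq
        rw [Multiset.count_sub, hcntB q] at hq1
        simp only [Finset.mem_filter, Finset.mem_univ, true_and, hcntB q]
        omega
      · exact (add_tsub_cancel_of_le hBle).symm
    · rintro ⟨p, hp, D, hD, rfl⟩
      obtain ⟨B, hBf, rfl⟩ := Finset.mem_image.mp hp
      have hB𝒞 : 𝒞 B := (Finset.mem_filter.mp hBf).2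
      refine hpumpD D B hB𝒞 fun q hq => ?_
      have h := hD q hq
      simp only [Finset.mem_filter, Finset.mem_univ, true_and] at h
      omega
  · calc ℬ.card ≤ (caps.filter 𝒞).card := Finset.card_image_le
      _ ≤ caps.card := Finset.card_filter_le _ _
      _ ≤ (Finset.univ : Finset (Q → Fin (N + 1))).card := Finset.card_image_le
      _ = (N + 1) ^ Fintype.card Q := by
          rw [Finset.card_univ, Fintype.card_fun, Fintype.card_fin]
      _ ≤ 2 ^ (2 * Fintype.card Q + 2).factorial := SBproof.needed_card_arith _
  · rintro p hp
    obtain ⟨B, hBf, rfl⟩ := Finset.mem_image.mp hp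
    obtain ⟨c, _, rfl⟩ := Finset.mem_image.mp (Finset.mem_filter.mp hBf).1
    have hle : ∀ q : Q, (SBproof.ofFn fun x => (c x : ℕ)).count q ≤ N := fun q => by
      rw [SBproof.count_ofFn]; exact Nat.lt_succ_iff.mp (c q).2
    have hNle : N ≤ 2 ^ (2 * (2 * Fintype.card Q + 1).factorial + 1) := by
      have h1 := SBproof.rf_bound (Fintype.card Q)
      have h2 : 2 ^ (2 * (2 * Fintype.card Q + 1).factorial + 1)
          = 2 * 2 ^ (2 * (2 * Fintype.card Q + 1).factorial) := by ring
      omega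
    simp only [normInf]
    exact le_trans (Finset.sup_le fun q _ => hle q) hNle
end

section
/- Let P be a population protocol with a single input variable x that computes the predicate x ≥ η for some η ≥ 2. Then there exists a sequence C_2, C_3, C_4, ... of configurations belonging to the set S of stable configurations such that (1) IC(i) →* C_i for every i ≥ 2, and (2) C_i + j·I(x) →* C_{i+j} for every i ≥ 2 and every j ≥ 0. -/
open PopulationProtocol

namespace Relation

variable {α : Type*} {r : α → α → Prop}

theorem ReflTransGen.exists_prepend {a : α} {f : ℕ → α} (h : ReflTransGen r a (f 0)) :
    ∃ m, ∃ g : ℕ → α, g 0 = a ∧ (∀ k, g (k + m) = f k) ∧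
      ∀ n, (∀ k < n, r (f k) (f (k + 1))) → ∀ k < m + n, r (g k) (g (k + 1)) := by
  induction h using ReflTransGen.head_induction_on with
  | refl => exact ⟨0, f, rfl, fun _ => rfl, fun n hf k hk => hf k (by omega)⟩
  | @head a _ hac _ ih =>
    obtain ⟨m, g, hg0, hgf, hg⟩ := ih
    refine ⟨m + 1, fun | 0 => a | k + 1 => g k, rfl, hgf, fun n hf k hk => ?_⟩
    cases k with
    | zero => rwa [← hg0] at hac
    | succ k => exact hg n hf k (by omega)

theorem exists_closed_walk_covering {b c₀ : α} (hbc₀ : r b c₀) (hc₀b : ReflTransGen r c₀ b)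
    (s : Finset α) (hs : ∀ c ∈ s, ReflTransGen r b c ∧ ReflTransGen r c b) :
    ∃ n, ∃ f : ℕ → α, 0 < n ∧ f 0 = b ∧ f n = b ∧ (∀ k < n, r (f k) (f (k + 1))) ∧
      ∀ c ∈ s, ∃ k < n, f k = c := by
  classical
  induction s using Finset.induction_on with
  | empty =>
    obtain ⟨m, g, hg0, hgb, hg⟩ := ReflTransGen.exists_prepend (f := fun _ => b) hc₀b
    refine ⟨m + 1, fun | 0 => b | k + 1 => g k, by omega, rfl, by simpa using hgb 0, ?_, by simp⟩
    rintro (_ | k) hk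
    · rwa [← hg0] at hbc₀
    · exact hg 0 (by simp) k (by omega)
  | insert c s _ ih =>
    obtain ⟨n, f, hn, hf0, hfn, hf, hfs⟩ := ih fun d hd => hs d (Finset.mem_insert_of_mem hd)
    obtain ⟨hbc, hcb⟩ := hs c (Finset.mem_insert_self c s)
    obtain ⟨m, g, hg0, hgf, hg⟩ := ReflTransGen.exists_prepend (hf0 ▸ hcb)
    obtain ⟨m', g', hg'0, hg'g, hg'⟩ := ReflTransGen.exists_prepend (hg0 ▸ hbc)
    refine ⟨m' + (m + n), g', by omega, hg'0, ?_, hg' _ (hg _ hf), ?_⟩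
    · rw [add_comm, hg'g, add_comm, hgf, hfn]
    · intro d hd
      rcases Finset.mem_insert.mp hd with rfl | hd
      · exact ⟨m', by omega, by rw [← zero_add m', hg'g, hg0]⟩
      · obtain ⟨k, hk, rfl⟩ := hfs d hd
        exact ⟨k + m + m', by omega, by rw [hg'g, hgf]⟩

theorem rel_mod_of_closed_walk {n : ℕ} {f : ℕ → α} (hn : 0 < n) (hfn : f n = f 0)
    (hf : ∀ k < n, r (f k) (f (k + 1))) (k : ℕ) : r (f (k % n)) (f ((k + 1) % n)) := by
  have hk := Nat.mod_lt k hn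
  rw [← Nat.mod_add_mod]
  rcases (Nat.succ_le_of_lt hk).lt_or_eq with hlt | heq
  · rw [Nat.mod_eq_of_lt hlt]
    exact hf _ hk
  · rw [Nat.succ_eq_add_one] at heq
    have hstep := hf _ hk
    rw [heq, hfn] at hstep
    rwa [heq, Nat.mod_self]

theorem exists_walk_visiting_infinitely_often {a b c₀ : α} (hab : ReflTransGen r a b)
    (hbc₀ : r b c₀) (hc₀b : ReflTransGen r c₀ b) (s : Finset α)
    (hs : ∀ c ∈ s, ReflTransGen r b c ∧ ReflTransGen r c b) :
    ∃ σ : ℕ → α, σ 0 = a ∧ (∀ k, r (σ k) (σ (k + 1))) ∧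
      ∃ m, σ m = b ∧ ∀ c ∈ s, ∀ N, ∃ k, N ≤ k ∧ σ k = c := by
  obtain ⟨n, f, hn, hf0, hfn, hf, hfs⟩ := exists_closed_walk_covering hbc₀ hc₀b s hs
  have hτ0 : f (0 % n) = b := by rwa [Nat.zero_mod]
  obtain ⟨m, σ, hσ0, hστ, hσ⟩ := ReflTransGen.exists_prepend (f := fun k => f (k % n)) (hτ0 ▸ hab)
  have hτ : ∀ k, r (f (k % n)) (f ((k + 1) % n)) :=
    rel_mod_of_closed_walk hn (hfn.trans hf0.symm) hf
  refine ⟨σ, hσ0, fun k => hσ (k + 1) (fun j _ => hτ j) k (by omega), m, ?_, ?_⟩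
  · simpa [hf0] using hστ 0
  · intro c hc N
    obtain ⟨j, hj, rfl⟩ := hfs c hc
    refine ⟨j + N * n + m, by nlinarith, ?_⟩
    rw [hστ, Nat.add_mul_mod_self_right, Nat.mod_eq_of_lt hj]

theorem reflTransGen_of_forall_rel_succ {σ : ℕ → α} (hσ : ∀ k, r (σ k) (σ (k + 1))) {i j : ℕ}
    (hij : i ≤ j) : ReflTransGen r (σ i) (σ j) := by
  induction j, hij using Nat.le_induction with
  | base => exact .refl
  | succ j _ ih => exact ih.tail (hσ j)

theorem exists_reflTransGen_forall_reflTransGen_imp {a : α}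
    (hfin : {b | ReflTransGen r a b}.Finite) :
    ∃ b, ReflTransGen r a b ∧ ∀ c, ReflTransGen r b c → ReflTransGen r c b := by
  obtain ⟨b, hab, hmin⟩ := Set.exists_min_image _ (fun b => {c | ReflTransGen r b c}.ncard) hfin
    ⟨a, .refl⟩
  refine ⟨b, hab, fun c hbc => ?_⟩
  have hsub : {d | ReflTransGen r c d} ⊆ {d | ReflTransGen r b d} := fun d hcd => hbc.trans hcd
  have heq := Set.eq_of_subset_of_ncard_le hsub (hmin c (hab.trans hbc))
    (hfin.subset fun d hbd => hab.trans hbd)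
  exact heq.symm.subset ReflTransGen.refl

end Relation

theorem exists_seq_of_forall_exists_succ {β : Type*} {p : ℕ → β → Prop} {R : β → β → Prop}
    (h₀ : ∃ x, p 0 x) (hsucc : ∀ k x, p k x → ∃ y, p (k + 1) y ∧ R x y) :
    ∃ f : ℕ → β, ∀ k, p k (f k) ∧ R (f k) (f (k + 1)) := by
  obtain ⟨x₀, h₀⟩ := h₀
  choose g hg using fun k (x : {x // p k x}) => hsucc k x x.2
  let f : (k : ℕ) → {x // p k x} := fun k => Nat.rec ⟨x₀, h₀⟩ (fun k x => ⟨g k x, (hg k x).1⟩) k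
  exact ⟨fun k => (f k).1, fun k => ⟨(f k).2, (hg k (f k)).2⟩⟩

namespace PopulationProtocol

variable {Q X : Type} {P : PopulationProtocol Q X}

theorem card_IC [Fintype X] (v : X → ℕ) :
    Multiset.card (P.IC v) = Multiset.card P.L + ∑ x, v x := by
  simp [IC, Multiset.card_sum]

theorem IC_const_succ (P : PopulationProtocol Q Unit) (i : ℕ) :
    (P.IC fun _ => i + 1) = (P.IC fun _ => i) + Multiset.replicate 1 (P.I ()) := by
  simp only [IC, Fintype.sum_unique, Multiset.replicate_add, add_assoc]

variable [DecidableEq Q]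

theorem Step.card_eq {C C' : Multiset Q} (h : P.Step C C') :
    Multiset.card C' = Multiset.card C := by
  obtain ⟨t, ht, hle, rfl⟩ := h
  have hcard := Multiset.card_le_card hle
  rw [P.pre_card t ht] at hcard
  rw [Multiset.card_add, Multiset.card_sub hle, P.pre_card t ht, P.post_card t ht]
  omega

theorem Reach.card_eq {C C' : Multiset Q} (h : P.Reach C C') :
    Multiset.card C' = Multiset.card C := by
  induction h with
  | refl => rfl
  | tail _ hstep ih => rw [hstep.card_eq, ih]

theorem Step.add_right {C C' : Multiset Q} (h : P.Step C C') (E : Multiset Q) :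
    P.Step (C + E) (C' + E) := by
  obtain ⟨t, ht, hle, rfl⟩ := h
  refine ⟨t, ht, hle.trans (Multiset.le_add_right _ _), ?_⟩
  rw [add_right_comm, tsub_add_eq_add_tsub hle]

theorem Reach.add_right {C C' : Multiset Q} (h : P.Reach C C') (E : Multiset Q) :
    P.Reach (C + E) (C' + E) :=
  Relation.ReflTransGen.lift (· + E) (fun _ _ hs => hs.add_right E) _ _ h

theorem exists_step {C : Multiset Q} (h : IsConfig C) : ∃ C', P.Step C C' := by
  obtain ⟨D, hD⟩ := Multiset.card_pos_iff_exists_mem.mp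
    (by rw [Multiset.card_powersetCard]; exact Nat.choose_pos h : 0 < (C.powersetCard 2).card)
  obtain ⟨hDC, hD⟩ := Multiset.mem_powersetCard.mp hD
  obtain ⟨p, q, rfl⟩ := Multiset.card_eq_two.mp hD
  obtain ⟨t, ht, hpre⟩ := P.total p q
  exact ⟨_, t, ht, hpre ▸ hDC, rfl⟩

theorem Reach.mem_or_mem_post {C E : Multiset Q} (h : P.Reach C E) {q : Q} (hq : q ∈ E) :
    q ∈ C ∨ ∃ t ∈ P.T, q ∈ t.2 := by
  induction h with
  | refl => exact .inl hq
  | tail _ hstep ih =>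
    obtain ⟨t, ht, -, rfl⟩ := hstep
    rcases Multiset.mem_add.mp hq with hq | hq
    · exact ih (Multiset.mem_of_le tsub_le_self hq)
    · exact .inr ⟨t, ht, hq⟩

theorem finite_setOf_reach (C : Multiset Q) : {E | P.Reach C E}.Finite := by
  let S : Finset Q := C.toFinset ∪ P.T.biUnion fun t => t.2.toFinset
  refine (Set.finite_Iic (Multiset.card C • S.val)).subset fun E hE => ?_
  rw [Set.mem_Iic, Multiset.le_iff_count]
  intro q
  by_cases hq : q ∈ E
  · have hqS : q ∈ S := by
      simp only [S, Finset.mem_union, Multiset.mem_toFinset, Finset.mem_biUnion]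
      exact Reach.mem_or_mem_post hE hq
    rw [Multiset.count_nsmul, Multiset.count_eq_one_of_mem S.nodup hqS, mul_one, ← Reach.card_eq hE]
    exact Multiset.count_le_card q E
  · simp [Multiset.count_eq_zero_of_notMem hq]

def IsBottom (P : PopulationProtocol Q X) (C : Multiset Q) : Prop :=
  ∀ E, P.Reach C E → P.Reach E C

theorem exists_reach_isBottom (D : Multiset Q) : ∃ C, P.Reach D C ∧ P.IsBottom C :=
  Relation.exists_reflTransGen_forall_reflTransGen_imp (finite_setOf_reach D)

theorem Stable.stableSet {b : Bool} {C : Multiset Q} (h : P.Stable b C) : P.StableSet C := by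
  cases b
  exacts [.inl h, .inr h]

theorem Computes.stable_of_isBottom [Fintype X] {φ : (X → ℕ) → Bool}
    (hφ : P.Computes φ) {v : X → ℕ} (hv : 2 ≤ ∑ x, v x) {C : Multiset Q}
    (hC : P.Reach (P.IC v) C) (hbot : P.IsBottom C) : P.Stable (φ v) C := by
  have hconf : IsConfig C := by
    unfold IsConfig
    rw [hC.card_eq, card_IC]
    omega
  obtain ⟨C₁, hCC₁⟩ := exists_step (P := P) hconf
  have hfin := finite_setOf_reach (P := P) C
  obtain ⟨σ, hσ0, hσ, m, hσm, hvisit⟩ :=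
    Relation.exists_walk_visiting_infinitely_often hC hCC₁ (hbot _ (.single hCC₁)) hfin.toFinset
      fun E hE => ⟨hfin.mem_toFinset.mp hE, hbot E (hfin.mem_toFinset.mp hE)⟩
  have hfair : P.Fair σ := by
    intro E hE N
    obtain ⟨k, hk, hσE⟩ := hE m
    have hCE : P.Reach C E := (hσm ▸ Relation.reflTransGen_of_forall_rel_succ hσ hk).trans hσE
    exact hvisit E (hfin.mem_toFinset.mpr hCE) N
  obtain ⟨N, hN⟩ := hφ v hv σ hσ hfair hσ0
  refine ⟨hconf, fun E hE => ?_⟩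
  obtain ⟨k, hk, rfl⟩ := hvisit E (hfin.mem_toFinset.mpr hE) N
  exact hN k hk

theorem Computes.exists_reach_stable [Fintype X] {φ : (X → ℕ) → Bool} (hφ : P.Computes φ)
    {v : X → ℕ} (hv : 2 ≤ ∑ x, v x) {D : Multiset Q} (hD : P.Reach (P.IC v) D) :
    ∃ C, P.Reach D C ∧ P.Stable (φ v) C := by
  obtain ⟨C, hDC, hbot⟩ := exists_reach_isBottom (P := P) D
  exact ⟨C, hDC, hφ.stable_of_isBottom hv (hD.trans hDC) hbot⟩

theorem reach_add_replicate {a : Q} {f : ℕ → Multiset Q}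
    (hf : ∀ k, P.Reach (f k + Multiset.replicate 1 a) (f (k + 1))) (k j : ℕ) :
    P.Reach (f k + Multiset.replicate j a) (f (k + j)) := by
  induction j with
  | zero => rw [Multiset.replicate_zero, add_zero, add_zero]; exact .refl
  | succ j ih =>
    rw [Multiset.replicate_add, ← add_assoc]
    exact (ih.add_right _).trans (hf (k + j))

end PopulationProtocol

theorem stable_sequence_general {Q : Type} [DecidableEq Q] (P : PopulationProtocol Q Unit)
    (η : ℕ) (hcomp : P.Computes fun v => decide (η ≤ v ())) :
    ∃ C : ℕ → Multiset Q,
      (∀ i, 2 ≤ i → P.StableSet (C i)) ∧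
      (∀ i, 2 ≤ i → P.Reach (P.IC fun _ => i) (C i)) ∧
      (∀ i, 2 ≤ i → ∀ j : ℕ, P.Reach (C i + Multiset.replicate j (P.I ())) (C (i + j))) := by
  have hstable : ∀ k D, P.Reach (P.IC fun _ => k + 2) D → ∃ C, P.Reach D C ∧ P.StableSet C :=
    fun k D hD => (hcomp.exists_reach_stable (by simp) hD).imp fun _ hC => ⟨hC.1, hC.2.stableSet⟩
  obtain ⟨C, hC⟩ := exists_seq_of_forall_exists_succ
    (p := fun k C => P.Reach (P.IC fun _ => k + 2) C ∧ P.StableSet C)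
    (R := fun C C' => P.Reach (C + Multiset.replicate 1 (P.I ())) C') (hstable 0 _ .refl)
    fun k D hD => by
      have hreach := IC_const_succ P (k + 2) ▸ hD.1.add_right (Multiset.replicate 1 (P.I ()))
      obtain ⟨C', hDC', hC'⟩ := hstable (k + 1) _ hreach
      exact ⟨C', ⟨hreach.trans hDC', hC'⟩, hDC'⟩
  refine ⟨fun i => C (i - 2), fun i hi => (hC (i - 2)).1.2, fun i hi => ?_, fun i hi j => ?_⟩
  · simpa [Nat.sub_add_cancel hi] using (hC (i - 2)).1.1
  · simpa [Nat.sub_add_comm hi] using reach_add_replicate (fun k => (hC k).2) (i - 2) j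

/-- existence of a sequence `C₂, C₃, …` of stable configurations with
`IC(i) →* C_i` and `C_i + j·I(x) →* C_{i+j}`. -/
theorem stable_sequence {Q : Type} [DecidableEq Q] (P : PopulationProtocol Q Unit)
    (η : ℕ) (hη : 2 ≤ η) (hcomp : P.Computes fun v => decide (η ≤ v ())) :
    ∃ C : ℕ → Multiset Q,
      (∀ i, 2 ≤ i → P.StableSet (C i)) ∧
      (∀ i, 2 ≤ i → P.Reach (P.IC fun _ => i) (C i)) ∧
      (∀ i, 2 ≤ i → ∀ j : ℕ, P.Reach (C i + Multiset.replicate j (P.I ())) (C (i + j))) :=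
  stable_sequence_general P η hcomp
end

section
/- For every δ ∈ ℕ, every function g : ℕ → ℕ and every dimension n ∈ ℕ, there exists N ∈ ℕ such that for every infinite sequence v_0, v_1, v_2, ... of vectors of ℕ^n satisfying |v_i| ≤ i + δ for all i (where |v| denotes the sum of the components of v), there exist indices i_0 < i_1 < ... < i_{g(n)} ≤ N with v_{i_0} ≤ v_{i_1} ≤ ... ≤ v_{i_{g(n)}} componentwise. -/
open PopulationProtocol


/-!
Compactness plus Dickson's lemma. If for every `N` some admissible sequence `w N` had no good chain
inside `[0, N]`, then, since each coordinate of an admissible sequence ranges over a finite set, the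
`w N` would converge coordinatewise along an ultrafilter finer than `atTop` to an admissible limit
`v`. By Dickson's lemma `v` has a good chain `i₀ < ⋯ < i_k`, and for a suitable large `N` the
sequence `w N` agrees with `v` at these finitely many indices, contradicting the badness of `w N`.
-/

open Filter

theorem Set.finite_setOf_sum_le {ι : Type*} [Fintype ι] (m : ℕ) :
    {u : ι → ℕ | ∑ j, u j ≤ m}.Finite :=
  (Set.Finite.pi fun _ => Set.finite_Iic m).subset fun _ hu j _ =>
    (Finset.single_le_sum (fun _ _ => Nat.zero_le _) (Finset.mem_univ j)).trans hu

theorem Ultrafilter.exists_forall_eventually_eq {β ι α : Type*} (U : Ultrafilter β)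
    (w : β → ι → α) (hw : ∀ i, (Set.range fun b => w b i).Finite) :
    ∃ v : ι → α, ∀ i, ∀ᶠ b in U, w b i = v i := by
  have hlim : ∀ i, ∃ a, ∀ᶠ b in U, w b i = a := fun i => by
    obtain ⟨a, -, ha⟩ := (U.map fun b => w b i).eq_pure_of_finite_mem (hw i)
      (Filter.mem_map.2 (Filter.univ_mem' fun b => ⟨b, rfl⟩))
    exact ⟨a, show {a} ∈ (U.map fun b => w b i : Filter α) from ha ▸ Filter.singleton_mem_pure⟩
  choose v hv using hlim
  exact ⟨v, hv⟩

theorem WellQuasiOrderedLE.exists_strictMono_fin_monotone {α : Type*} [Preorder α]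
    [WellQuasiOrderedLE α] (v : ℕ → α) (k : ℕ) :
    ∃ idx : Fin (k + 1) → ℕ, StrictMono idx ∧ Monotone (v ∘ idx) := by
  obtain ⟨e, he⟩ := wellQuasiOrdered_le.exists_monotone_subseq v
  exact ⟨fun a => e a, fun a b hab => e.strictMono (by exact_mod_cast hab),
    fun a b hab => he a b (by exact_mod_cast hab)⟩

theorem WellQuasiOrderedLE.exists_bound_monotone_chain {α : Type*} [Preorder α]
    [WellQuasiOrderedLE α] (S : ℕ → Set α) (hS : ∀ i, (S i).Finite) (k : ℕ) :
    ∃ N, ∀ v : ℕ → α, (∀ i, v i ∈ S i) →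
      ∃ idx : Fin (k + 1) → ℕ, StrictMono idx ∧ idx (Fin.last k) ≤ N ∧ Monotone (v ∘ idx) := by
  by_contra! hbad
  choose w hwS hw using hbad
  let U : Ultrafilter ℕ := .of atTop
  obtain ⟨v, hv⟩ := U.exists_forall_eventually_eq w fun i =>
    (hS i).subset (Set.range_subset_iff.2 fun N => hwS N i)
  obtain ⟨idx, hmono, hchain⟩ := exists_strictMono_fin_monotone v k
  have hagree : ∀ᶠ N in U, ∀ a, w N (idx a) = v (idx a) :=
    Filter.eventually_all.2 fun a => hv (idx a)
  have hlarge : ∀ᶠ N in U, idx (Fin.last k) ≤ N :=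
    Ultrafilter.of_le atTop (Filter.eventually_ge_atTop _)
  obtain ⟨N, hNw, hN⟩ := (hagree.and hlarge).exists
  refine hw N idx hmono hN fun a b hab => ?_
  simpa only [Function.comp_apply, hNw] using hchain hab

/-- bounded, length-controlled strengthening of Dickson's lemma: every
infinite sequence of vectors of `ℕ^n` with `|v_i| ≤ i + δ` contains an increasing (componentwise)
subsequence of length `g(n)+1` entirely within a prefix of length bounded by some `N`. -/
theorem controlled_dickson (δ : ℕ) (g : ℕ → ℕ) (n : ℕ) :
    ∃ N : ℕ, ∀ v : ℕ → (Fin n → ℕ), (∀ i, (∑ j, v i j) ≤ i + δ) →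
      ∃ idx : Fin (g n + 1) → ℕ, StrictMono idx ∧ idx (Fin.last (g n)) ≤ N ∧
        Monotone (v ∘ idx) :=
  WellQuasiOrderedLE.exists_bound_monotone_chain (fun i => {u : Fin n → ℕ | ∑ j, u j ≤ i + δ})
    (fun i => Set.finite_setOf_sum_le (i + δ)) (g n)
end

section
/- Let P be a population protocol, let C, C' be configurations and π ∈ ℕ^T a multiset of transitions such that C' = C + Δ(π). If C is 2|π|-saturated, i.e. C(q) ≥ 2|π| for every state q ∈ Q, then C →σ C' for every finite sequence σ of transitions whose Parikh mapping is π. -/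
open PopulationProtocol

/-! Firing a transition removes at most two agents from any state, so a `2|σ|`-saturated
configuration stays `2|τ|`-saturated for every suffix `τ` of `σ` and each transition of `σ` is
enabled when its turn comes; the configuration reached is `C + Δ(σ)` whatever the order. -/

namespace PopulationProtocol

variable {Q X : Type} [DecidableEq Q] {P : PopulationProtocol Q X}
  {t : Multiset Q × Multiset Q} {C C' : Multiset Q}

theorem count_pre_le_two (ht : t ∈ P.T) (q : Q) : Multiset.count q t.1 ≤ 2 :=
  P.pre_card t ht ▸ Multiset.count_le_card q t.1

theorem Saturated.mono {i j : ℕ} (hij : i ≤ j) (hC : Saturated j C) : Saturated i C :=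
  fun q => hij.trans (hC q)

theorem Saturated.pre_le (hC : Saturated 2 C) (ht : t ∈ P.T) : t.1 ≤ C :=
  Multiset.le_iff_count.2 fun q => (count_pre_le_two ht q).trans (hC q)

theorem Saturated.fire {j : ℕ} (hC : Saturated (j + 2) C) (ht : t ∈ P.T) :
    Saturated j (C - t.1 + t.2) := by
  intro q
  have := count_pre_le_two ht q
  have := hC q
  rw [Multiset.count_add, Multiset.count_sub]
  omega

theorem count_fire (hle : t.1 ≤ C) (q : Q) :
    (Multiset.count q (C - t.1 + t.2) : ℤ) = Multiset.count q C + displ t q := by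
  rw [Multiset.count_add, Multiset.count_sub, displ,
    Nat.cast_add, Nat.cast_sub (Multiset.le_iff_count.1 hle q)]
  ring

theorem AddDispl.eq_of_zero (h : AddDispl C 0 C') : C' = C :=
  Multiset.ext.2 fun q => by simpa [displM] using h q

theorem addDispl_cons_iff {π : Multiset (Multiset Q × Multiset Q)} (hle : t.1 ≤ C) :
    AddDispl C (t ::ₘ π) C' ↔ AddDispl (C - t.1 + t.2) π C' := by
  refine forall_congr' fun q => ?_
  rw [count_fire hle, displM, displM, Multiset.map_cons, Multiset.sum_cons, add_assoc]

theorem fireSeq_of_saturated (σ : List (Multiset Q × Multiset Q)) (hσ : ∀ t ∈ σ, t ∈ P.T)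
    (h : AddDispl C σ C') (hC : Saturated (2 * σ.length) C) : P.FireSeq σ C C' := by
  induction σ generalizing C with
  | nil => exact h.eq_of_zero
  | cons t σ ih =>
    have ht : t ∈ P.T := hσ t List.mem_cons_self
    have hle : t.1 ≤ C := (hC.mono (by simp)).pre_le ht
    refine ⟨C - t.1 + t.2, ⟨ht, hle, rfl⟩, ih (fun u hu => hσ u (List.mem_cons_of_mem t hu))
      ((addDispl_cons_iff hle).1 h) (Saturated.fire ?_ ht)⟩
    simpa [Nat.mul_succ] using hC

end PopulationProtocol

/-- if `C' = C + Δ(π)` for `π ∈ ℕ^T` and `C` is `2|π|`-saturated, then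
`C →σ C'` for every sequence `σ` with Parikh mapping `π`. -/
theorem saturated_fire {Q X : Type} [DecidableEq Q] (P : PopulationProtocol Q X)
    (C C' : Multiset Q) (π : Multiset (Multiset Q × Multiset Q))
    (hπ : ∀ t ∈ π, t ∈ P.T) (h : AddDispl C π C')
    (hsat : Saturated (2 * Multiset.card π) C) :
    ∀ σ : List (Multiset Q × Multiset Q),
      (↑σ : Multiset (Multiset Q × Multiset Q)) = π → P.FireSeq σ C C' := by
  rintro σ rfl
  exact fireSeq_of_saturated σ (fun t ht => hπ t (Multiset.mem_coe.2 ht)) h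
    (by simpa using hsat)
end

section
/- Let P be a leaderless population protocol with a single input variable x and input state q_x = I(x). Assume every state is coverable: for every q ∈ Q there exist i ∈ ℕ and a configuration C with IC(i) →* C and C(q) > 0. Let C be a configuration satisfying q_x ∈ supp(C) and supp(C) ⊊ Q. Then there exists a transition p,q ↦ p',q' in T such that {p,q} ⊆ supp(C) and {p',q'} ⊄ supp(C). -/
open PopulationProtocol

/-- if every state is coverable, and `C` is a configuration whose support
contains the input state but is a proper subset of `Q`, then some transition is enabled on
`supp(C)` and moves an agent out of `supp(C)`. -/
theorem find_transition {Q : Type} [DecidableEq Q] (P : PopulationProtocol Q Unit)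
    (hL : P.L = 0)
    (hcov : ∀ q : Q, ∃ i : ℕ, ∃ C : Multiset Q, P.Reach (P.IC fun _ => i) C ∧ q ∈ C)
    (C : Multiset Q) (hC : IsConfig C) (hx : P.I () ∈ C) (hproper : ∃ q : Q, q ∉ C) :
    ∃ t ∈ P.T, (∀ q ∈ t.1, q ∈ C) ∧ ¬(∀ q ∈ t.2, q ∈ C) := by

  obtain ⟨q0, hq0⟩ := hproper
  obtain ⟨i, B, hreach, hqB⟩ := hcov q0
  have aux : ∀ A B : Multiset Q, P.Reach A B → (∀ q ∈ A, q ∈ C) →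
      (∀ q ∈ B, q ∈ C) ∨ ∃ t ∈ P.T, (∀ q ∈ t.1, q ∈ C) ∧ ¬(∀ q ∈ t.2, q ∈ C) := by
    intro A B h
    induction h using Relation.ReflTransGen.head_induction_on with
    | refl => intro h; exact Or.inl h
    | head hstep _ ih =>
      rename_i A' D _
      intro hA
      obtain ⟨t, htT, hle, hD⟩ := hstep
      by_cases h2 : ∀ q ∈ t.2, q ∈ C
      · apply ih
        intro q hq
        rw [hD] at hq
        rcases Multiset.mem_add.1 hq with h | h
        · exact hA q (Multiset.mem_of_le (Multiset.sub_le_self _ _) h)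
        · exact h2 q h
      · exact Or.inr ⟨t, htT, fun q hq => hA q (Multiset.mem_of_le hle hq), h2⟩
  have hIC : ∀ q ∈ P.IC (fun _ => i), q ∈ C := by
    intro q hq
    unfold PopulationProtocol.IC at hq
    rw [hL] at hq
    simp only [zero_add, Finset.univ_unique, Finset.sum_singleton] at hq
    rw [Multiset.eq_of_mem_replicate hq]
    exact hx
  rcases aux _ _ hreach hIC with h | h
  · exact absurd (h q0 hqB) hq0
  · exact h
end

section
/- Let P be a leaderless population protocol with n states and a single input variable x such that every state is coverable (for every q ∈ Q there exist i ∈ ℕ and a configuration C with IC(i) →* C and C(q) > 0). Then there exist a finite sequence σ of transitions of length at most 3^n and a 1-saturated configuration C such that IC(3^n) →σ C. -/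
open PopulationProtocol

/-!
Grow the set `S` of populated states one state at a time. If a firing sequence `σ` takes
`N` agents in the input state to a configuration `C` populating `S`, then `σσσ` takes `3N`
agents to `C + C + C`, which holds at least three agents in each state of `S`. A transition
whose pre-states lie in `S` consumes at most two agents, so it can now fire without emptying
any state of `S`, and its post-states join `S`. While `S ≠ Q` such a transition producing a
new state exists: otherwise `S` would be closed under transitions and, containing the input
state, would contain every coverable state. Hence `3^n` agents populate all `n` states after
fewer than `3^n` transitions.
-/

namespace Multiset

variable {α : Type*} [DecidableEq α]

theorem le_add_of_card_le_two {s C : Multiset α} (hs : card s ≤ 2)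
    (h : ∀ a ∈ s, a ∈ C) : s ≤ C + C := by
  rw [le_iff_count]
  intro a
  have hcount : count a s ≤ 2 := (count_le_card a s).trans hs
  by_cases ha : a ∈ s
  · have := one_le_count_iff_mem.2 (h a ha)
    rw [count_add]
    omega
  · simp [count_eq_zero_of_notMem ha]

theorem mem_add_add_sub_of_card_le_two {s C : Multiset α} {a : α} (hs : card s ≤ 2)
    (ha : a ∈ C) : a ∈ C + C + C - s := by
  have h₁ := one_le_count_iff_mem.2 ha
  have h₂ := (count_le_card a s).trans hs
  rw [← one_le_count_iff_mem, count_sub, count_add, count_add]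
  omega

end Multiset

namespace PopulationProtocol

section FireSeq

variable {Q X : Type} [DecidableEq Q] {P : PopulationProtocol Q X}

theorem FireSeq.append {σ τ : List (Multiset Q × Multiset Q)} {A B C : Multiset Q}
    (h₁ : P.FireSeq σ A B) (h₂ : P.FireSeq τ B C) : P.FireSeq (σ ++ τ) A C := by
  induction σ generalizing A with
  | nil => exact (h₁ : B = A) ▸ h₂
  | cons t σ ih =>
    obtain ⟨D, hstep, hrest⟩ := h₁
    exact ⟨D, hstep, ih hrest⟩

theorem FireSeq.add_right {σ : List (Multiset Q × Multiset Q)} {A B : Multiset Q}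
    (h : P.FireSeq σ A B) (D : Multiset Q) : P.FireSeq σ (A + D) (B + D) := by
  induction σ generalizing A with
  | nil => exact congrArg (· + D) (h : B = A)
  | cons t σ ih =>
    obtain ⟨E, ⟨ht, hle, rfl⟩, hrest⟩ := h
    refine ⟨_, ⟨ht, hle.trans (Multiset.le_add_right _ _), ?_⟩, ih hrest⟩
    rw [← tsub_add_eq_add_tsub hle, add_right_comm]

theorem FireSeq.add {σ τ : List (Multiset Q × Multiset Q)} {A B A' B' : Multiset Q}
    (h : P.FireSeq σ A B) (h' : P.FireSeq τ A' B') :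
    P.FireSeq (σ ++ τ) (A + A') (B + B') := by
  refine (h.add_right A').append ?_
  simpa only [add_comm B] using h'.add_right B

theorem FireSeq.singleton {t : Multiset Q × Multiset Q} {C : Multiset Q} (ht : t ∈ P.T)
    (hle : t.1 ≤ C) : P.FireSeq [t] C (C - t.1 + t.2) :=
  ⟨_, ⟨ht, hle, rfl⟩, rfl⟩

end FireSeq

section TransitionClosed

variable {Q X : Type} [DecidableEq Q] (P : PopulationProtocol Q X)

def IsTransitionClosed (S : Finset Q) : Prop :=
  ∀ t ∈ P.T, (∀ r ∈ t.1, r ∈ S) → ∀ q ∈ t.2, q ∈ S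

variable {P}

theorem Reach.mem_of_isTransitionClosed {S : Finset Q} (hS : P.IsTransitionClosed S)
    {A C : Multiset Q} (hA : ∀ q ∈ A, q ∈ S) (h : P.Reach A C) : ∀ q ∈ C, q ∈ S := by
  induction h with
  | refl => exact hA
  | tail _ hstep ih =>
    obtain ⟨t, ht, hle, rfl⟩ := hstep
    intro q hq
    rcases Multiset.mem_add.1 hq with hq | hq
    · exact ih q (Multiset.mem_of_le (Multiset.sub_le_self _ _) hq)
    · exact hS t ht (fun r hr => ih r (Multiset.mem_of_le hle hr)) q hq

end TransitionClosed

theorem IC_eq_replicate {Q : Type} (P : PopulationProtocol Q Unit) (hL : P.L = 0) (i : ℕ) :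
    (P.IC fun _ => i) = Multiset.replicate i (P.I ()) := by
  simp [IC, hL]

variable {Q : Type} [DecidableEq Q] (P : PopulationProtocol Q Unit)

def PopulatesWithin (N ℓ : ℕ) (S : Finset Q) : Prop :=
  ∃ σ : List (Multiset Q × Multiset Q), ∃ C : Multiset Q,
    σ.length < ℓ ∧ P.FireSeq σ (Multiset.replicate N (P.I ())) C ∧ ∀ q ∈ S, q ∈ C

variable {P}

theorem PopulatesWithin.mono {N N' ℓ ℓ' : ℕ} {S : Finset Q} (h : P.PopulatesWithin N ℓ S)
    (hN : N ≤ N') (hℓ : ℓ ≤ ℓ') : P.PopulatesWithin N' ℓ' S := by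
  obtain ⟨σ, C, hlen, hfire, hS⟩ := h
  refine ⟨σ, C + Multiset.replicate (N' - N) (P.I ()), hlen.trans_le hℓ, ?_,
    fun q hq => Multiset.mem_add.2 (Or.inl (hS q hq))⟩
  rw [← Nat.add_sub_cancel' hN, Multiset.replicate_add, Nat.add_sub_cancel_left]
  exact hfire.add_right _

theorem PopulatesWithin.insert {N ℓ : ℕ} {S : Finset Q} (h : P.PopulatesWithin N ℓ S)
    {t : Multiset Q × Multiset Q} (ht : t ∈ P.T) (hpre : ∀ r ∈ t.1, r ∈ S)
    {q : Q} (hq : q ∈ t.2) : P.PopulatesWithin (3 * N) (3 * ℓ) (insert q S) := by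
  obtain ⟨σ, C, hlen, hfire, hS⟩ := h
  have hcard : Multiset.card t.1 ≤ 2 := (P.pre_card t ht).le
  have hle : t.1 ≤ C + C + C :=
    (Multiset.le_add_of_card_le_two hcard fun r hr => hS r (hpre r hr)).trans
      (Multiset.le_add_right _ _)
  refine ⟨σ ++ σ ++ σ ++ [t], C + C + C - t.1 + t.2, ?_, ?_, ?_⟩
  · simp only [List.length_append, List.length_singleton]
    omega
  · rw [show 3 * N = N + N + N by ring, Multiset.replicate_add, Multiset.replicate_add]
    exact ((hfire.add hfire).add hfire).append (FireSeq.singleton ht hle)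
  · intro r hr
    rcases Finset.mem_insert.1 hr with rfl | hr
    · exact Multiset.mem_add.2 (Or.inr hq)
    · exact Multiset.mem_add.2
        (Or.inl (Multiset.mem_add_add_sub_of_card_le_two hcard (hS r hr)))

theorem exists_transition_leaving (hL : P.L = 0)
    (hcov : ∀ q : Q, ∃ i : ℕ, ∃ C : Multiset Q, P.Reach (P.IC fun _ => i) C ∧ q ∈ C)
    {S : Finset Q} (hI : P.I () ∈ S) {q : Q} (hqS : q ∉ S) :
    ∃ t ∈ P.T, (∀ r ∈ t.1, r ∈ S) ∧ ∃ q ∈ t.2, q ∉ S := by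
  by_contra! hclosed
  obtain ⟨i, C, hreach, hqC⟩ := hcov q
  refine hqS (Reach.mem_of_isTransitionClosed hclosed (fun r hr => ?_) hreach q hqC)
  rw [IC_eq_replicate P hL] at hr
  rwa [Multiset.eq_of_mem_replicate hr]

variable [Fintype Q]

theorem exists_populatesWithin (hL : P.L = 0)
    (hcov : ∀ q : Q, ∃ i : ℕ, ∃ C : Multiset Q, P.Reach (P.IC fun _ => i) C ∧ q ∈ C)
    (k : ℕ) : ∃ S : Finset Q, P.I () ∈ S ∧ min (k + 1) (Fintype.card Q) ≤ S.card ∧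
      P.PopulatesWithin (3 ^ k) (3 ^ k) S := by
  induction k with
  | zero =>
    refine ⟨{P.I ()}, Finset.mem_singleton_self _, by simp, [], _, by simp, rfl, ?_⟩
    simp [Multiset.mem_replicate]
  | succ k ih =>
    obtain ⟨S, hI, hcard, hpop⟩ := ih
    rw [pow_succ']
    by_cases hS : ∀ q, q ∈ S
    · refine ⟨S, hI, ?_, hpop.mono (by omega) (by omega)⟩
      rw [Finset.eq_univ_of_forall hS, Finset.card_univ]
      omega
    · obtain ⟨q₀, hq₀⟩ := not_forall.1 hS
      obtain ⟨t, ht, hpre, q, hq, hqS⟩ := exists_transition_leaving hL hcov hI hq₀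
      refine ⟨insert q S, Finset.mem_insert_of_mem hI, ?_, hpop.insert ht hpre hq⟩
      rw [Finset.card_insert_of_notMem hqS]
      have : S.card < Fintype.card Q := Finset.card_lt_univ_of_notMem hqS
      omega

end PopulationProtocol

/-- for a leaderless protocol with `n` states in which every state is
coverable, `IC(3^n)` reaches a `1`-saturated configuration via a sequence of length at most
`3^n`. -/
theorem reach_saturated {Q : Type} [DecidableEq Q] [Fintype Q]
    (P : PopulationProtocol Q Unit) (hL : P.L = 0) (n : ℕ) (hn : Fintype.card Q = n)
    (hcov : ∀ q : Q, ∃ i : ℕ, ∃ C : Multiset Q, P.Reach (P.IC fun _ => i) C ∧ q ∈ C) :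
    ∃ σ : List (Multiset Q × Multiset Q), ∃ C : Multiset Q,
      σ.length ≤ 3 ^ n ∧ P.FireSeq σ (P.IC fun _ => 3 ^ n) C ∧ Saturated 1 C := by
  subst hn
  obtain ⟨S, -, hcard, σ, C, hlen, hfire, hS⟩ :=
    exists_populatesWithin hL hcov (Fintype.card Q)
  have hSuniv : S = Finset.univ :=
    Finset.eq_univ_of_card S (le_antisymm (Finset.card_le_univ S) (by omega))
  refine ⟨σ, C, hlen.le, IC_eq_replicate P hL _ ▸ hfire, fun q => ?_⟩
  exact Multiset.one_le_count_iff_mem.2 (hS q (hSuniv ▸ Finset.mem_univ q))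
end

section
/- Let P be a leaderless population protocol with n states and a single input variable that computes some predicate φ : ℕ → {0,1}. Let β = 2^{2(2n+1)!+1}, let k ≥ 1, let a = k·n·β, and let D be a configuration with IC(a) →* D. Then there exist a basis element (B, S) of the set S of stable configurations with ‖B‖_∞ ≤ β and a multiset D_a ∈ ℕ^S such that (1) IC(a) →* D →* B + D_a, and (2) B + D_a is (1/k)-concentrated in S. -/
open PopulationProtocol

namespace PPAux

open PopulationProtocol Multiset

variable {Q X : Type} [DecidableEq Q]

abbrev Tr (Q : Type) := Multiset Q × Multiset Q

def dsum (σ : List (Tr Q)) (q : Q) : ℤ := (σ.map fun t => displ t q).sum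

@[simp] lemma dsum_nil (q : Q) : dsum ([] : List (Tr Q)) q = 0 := rfl

@[simp] lemma dsum_cons (t : Tr Q) (σ : List (Tr Q)) (q : Q) :
    dsum (t :: σ) q = displ t q + dsum σ q := by simp [dsum]

@[simp] lemma dsum_append (σ₁ σ₂ : List (Tr Q)) (q : Q) :
    dsum (σ₁ ++ σ₂) q = dsum σ₁ q + dsum σ₂ q := by simp [dsum]

lemma count_fst_le (P : PopulationProtocol Q X) {t : Tr Q} (ht : t ∈ P.T) (q : Q) :
    Multiset.count q t.1 ≤ 2 :=
  le_trans (Multiset.count_le_card q t.1) (le_of_eq (P.pre_card t ht))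

lemma displ_ge (P : PopulationProtocol Q X) {t : Tr Q} (ht : t ∈ P.T) (q : Q) :
    (-2 : ℤ) ≤ displ t q := by
  have h1 : ((Multiset.count q t.1 : ℕ) : ℤ) ≤ 2 := by exact_mod_cast count_fst_le P ht q
  have h2 : (0:ℤ) ≤ (Multiset.count q t.2 : ℤ) := by positivity
  unfold displ; omega

lemma dsum_ge (P : PopulationProtocol Q X) {σ : List (Tr Q)} (hσ : ∀ t ∈ σ, t ∈ P.T) (q : Q) :
    -(2 * (σ.length : ℤ)) ≤ dsum σ q := by
  induction σ with
  | nil => simp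
  | cons t σ ih =>
    have h1 := displ_ge P (hσ t (by simp)) q
    have h2 := ih (fun t' ht' => hσ t' (by simp [ht']))
    simp only [dsum_cons, List.length_cons]
    push_cast
    omega

lemma stepT_count {P : PopulationProtocol Q X} {t : Tr Q} {C C' : Multiset Q}
    (h : P.StepT t C C') (q : Q) :
    (Multiset.count q C' : ℤ) = Multiset.count q C + displ t q := by
  obtain ⟨ht, hle, rfl⟩ := h
  have hc := Multiset.le_iff_count.mp hle q
  have hn : Multiset.count q (C - t.1 + t.2)
      = Multiset.count q C - Multiset.count q t.1 + Multiset.count q t.2 := by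
    simp [Multiset.count_sub]
  unfold displ
  omega

lemma stepT_step {P : PopulationProtocol Q X} {t : Tr Q} {C C' : Multiset Q}
    (h : P.StepT t C C') : P.Step C C' := ⟨t, h.1, h.2.1, h.2.2⟩

lemma step_card {P : PopulationProtocol Q X} {C C' : Multiset Q} (h : P.Step C C') :
    Multiset.card C' = Multiset.card C := by
  obtain ⟨t, ht, hle, rfl⟩ := h
  have h1 := P.pre_card t ht
  have h2 := P.post_card t ht
  have h3 := Multiset.card_le_card hle
  rw [Multiset.card_add, Multiset.card_sub hle]
  omega

lemma reach_card {P : PopulationProtocol Q X} {C C' : Multiset Q} (h : P.Reach C C') :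
    Multiset.card C' = Multiset.card C := by
  induction h with
  | refl => rfl
  | tail _ hstep ih => rw [step_card hstep, ih]

lemma step_add {P : PopulationProtocol Q X} {C C' : Multiset Q} (h : P.Step C C')
    (E : Multiset Q) : P.Step (C + E) (C' + E) := by
  obtain ⟨t, ht, hle, rfl⟩ := h
  refine ⟨t, ht, le_trans hle (Multiset.le_add_right _ _), ?_⟩
  apply Multiset.ext.mpr
  intro q
  have := Multiset.le_iff_count.mp hle q
  simp only [Multiset.count_add, Multiset.count_sub]
  omega

lemma reach_add {P : PopulationProtocol Q X} {C C' : Multiset Q} (h : P.Reach C C')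
    (E : Multiset Q) : P.Reach (C + E) (C' + E) := by
  induction h with
  | refl => exact Relation.ReflTransGen.refl
  | tail _ hstep ih => exact Relation.ReflTransGen.tail ih (step_add hstep E)

def Covers (P : PopulationProtocol Q X) (C : Multiset Q) (q₀ : Q) : Prop :=
  ∃ C', P.Reach C C' ∧ q₀ ∈ C'

lemma covers_mono {P : PopulationProtocol Q X} {m C : Multiset Q} {q₀ : Q}
    (hle : m ≤ C) (h : Covers P m q₀) : Covers P C q₀ := by
  obtain ⟨C', hr, hm⟩ := h
  refine ⟨C' + (C - m), ?_, Multiset.mem_add.mpr (Or.inl hm)⟩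
  have := reach_add hr (C - m)
  rwa [add_comm m, tsub_add_cancel_of_le hle] at this

lemma fireSeq_reach {P : PopulationProtocol Q X} :
    ∀ {σ : List (Tr Q)} {C C' : Multiset Q}, P.FireSeq σ C C' → P.Reach C C' := by
  intro σ
  induction σ with
  | nil => intro C C' h; rw [show C' = C from h]; exact Relation.ReflTransGen.refl
  | cons t σ ih =>
    intro C C' h
    obtain ⟨D, hst, hfs⟩ := h
    exact Relation.ReflTransGen.head (stepT_step hst) (ih hfs)

lemma reach_fireSeq {P : PopulationProtocol Q X} {C C' : Multiset Q} (h : P.Reach C C') :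
    ∃ σ, P.FireSeq σ C C' := by
  induction h using Relation.ReflTransGen.head_induction_on with
  | refl => exact ⟨[], rfl⟩
  | head hstep _ ih =>
    obtain ⟨σ, hσ⟩ := ih
    obtain ⟨t, ht, hle, hD⟩ := hstep
    exact ⟨t :: σ, _, ⟨ht, hle, hD⟩, hσ⟩

lemma fireSeq_count {P : PopulationProtocol Q X} :
    ∀ {σ : List (Tr Q)} {C C' : Multiset Q}, P.FireSeq σ C C' →
      ∀ q, (Multiset.count q C' : ℤ) = Multiset.count q C + dsum σ q := by
  intro σ
  induction σ with
  | nil => intro C C' h q; rw [show C' = C from h]; simp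
  | cons t σ ih =>
    intro C C' h q
    obtain ⟨D, hst, hfs⟩ := h
    have h1 := ih hfs q
    have h2 := stepT_count hst q
    simp only [dsum_cons]
    omega

lemma fireSeq_append {P : PopulationProtocol Q X} :
    ∀ {σ₁ σ₂ : List (Tr Q)} {C C' : Multiset Q},
      P.FireSeq (σ₁ ++ σ₂) C C' ↔ ∃ M, P.FireSeq σ₁ C M ∧ P.FireSeq σ₂ M C' := by
  intro σ₁
  induction σ₁ with
  | nil =>
    intro σ₂ C C'
    constructor
    · intro h; exact ⟨C, rfl, h⟩
    · rintro ⟨M, hM, h⟩; rw [show M = C from hM] at h; exact h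
  | cons t σ₁ ih =>
    intro σ₂ C C'
    constructor
    · rintro ⟨D, hst, hfs⟩
      obtain ⟨M, h1, h2⟩ := ih.mp hfs
      exact ⟨M, ⟨D, hst, h1⟩, h2⟩
    · rintro ⟨M, ⟨D, hst, h1⟩, h2⟩
      exact ⟨D, hst, ih.mpr ⟨M, h1, h2⟩⟩

end PPAux
namespace PPAux

variable {Q X : Type} [DecidableEq Q]

/-- A run is good from value `v` w.r.t. coordinates `A`: each transition is in `T` and
is "enabled on `A`" at the current `ℤ`-valuation. -/
def GoodFrom (P : PopulationProtocol Q X) (A : Finset Q) : (Q → ℤ) → List (Tr Q) → Prop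
  | _, [] => True
  | v, t :: σ => t ∈ P.T ∧ (∀ q ∈ A, (Multiset.count q t.1 : ℤ) ≤ v q) ∧
      GoodFrom P A (fun q => v q + displ t q) σ

@[simp] lemma goodFrom_nil (P : PopulationProtocol Q X) (A : Finset Q) (v : Q → ℤ) :
    GoodFrom P A v [] := trivial

lemma goodFrom_cons (P : PopulationProtocol Q X) (A : Finset Q) (v : Q → ℤ) (t : Tr Q)
    (σ : List (Tr Q)) :
    GoodFrom P A v (t :: σ) ↔ t ∈ P.T ∧ (∀ q ∈ A, (Multiset.count q t.1 : ℤ) ≤ v q) ∧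
      GoodFrom P A (fun q => v q + displ t q) σ := Iff.rfl

lemma goodFrom_mem {P : PopulationProtocol Q X} {A : Finset Q} :
    ∀ {σ : List (Tr Q)} {v : Q → ℤ}, GoodFrom P A v σ → ∀ t ∈ σ, t ∈ P.T := by
  intro σ
  induction σ with
  | nil => intro v _ t ht; simp at ht
  | cons s σ ih =>
    intro v h t ht
    rcases List.mem_cons.mp ht with h1 | h2
    · rw [h1]; exact h.1
    · exact ih h.2.2 t h2

lemma goodFrom_congr {P : PopulationProtocol Q X} {A : Finset Q} :
    ∀ {σ : List (Tr Q)} {v w : Q → ℤ}, (∀ q ∈ A, v q = w q) →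
      GoodFrom P A v σ → GoodFrom P A w σ := by
  intro σ
  induction σ with
  | nil => intro v w _ _; trivial
  | cons t σ ih =>
    intro v w hvw h
    refine ⟨h.1, fun q hq => (hvw q hq) ▸ h.2.1 q hq, ?_⟩
    exact ih (fun q hq => by rw [hvw q hq]) h.2.2

lemma goodFrom_mono {P : PopulationProtocol Q X} {A A' : Finset Q} (hA : A' ⊆ A) :
    ∀ {σ : List (Tr Q)} {v : Q → ℤ}, GoodFrom P A v σ → GoodFrom P A' v σ := by
  intro σ
  induction σ with
  | nil => intro v _; trivial
  | cons t σ ih =>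
    intro v h
    exact ⟨h.1, fun q hq => h.2.1 q (hA hq), ih h.2.2⟩

lemma goodFrom_append {P : PopulationProtocol Q X} {A : Finset Q} :
    ∀ {σ₁ σ₂ : List (Tr Q)} {v : Q → ℤ},
      GoodFrom P A v (σ₁ ++ σ₂) ↔
        GoodFrom P A v σ₁ ∧ GoodFrom P A (fun q => v q + dsum σ₁ q) σ₂ := by
  intro σ₁
  induction σ₁ with
  | nil =>
    intro σ₂ v
    simp only [List.nil_append, goodFrom_nil, true_and, dsum_nil, add_zero]
  | cons t σ₁ ih =>
    intro σ₂ v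
    simp only [List.cons_append, goodFrom_cons, dsum_cons]
    constructor
    · rintro ⟨h1, h2, h3⟩
      obtain ⟨h4, h5⟩ := ih.mp h3
      refine ⟨⟨h1, h2, h4⟩, goodFrom_congr (fun q _ => by ring) h5⟩
    · rintro ⟨⟨h1, h2, h3⟩, h4⟩
      exact ⟨h1, h2, ih.mpr ⟨h3, goodFrom_congr (fun q _ => by ring) h4⟩⟩

lemma goodFrom_nonneg {P : PopulationProtocol Q X} {A : Finset Q} :
    ∀ {σ : List (Tr Q)} {v : Q → ℤ}, GoodFrom P A v σ →
      ∀ j, j < σ.length → ∀ q ∈ A, 0 ≤ v q + dsum (σ.take j) q := by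
  intro σ
  induction σ with
  | nil => intro v _ j hj; simp at hj
  | cons t σ ih =>
    intro v h j hj q hq
    match j with
    | 0 =>
      simp only [List.take_zero, dsum_nil, add_zero]
      exact le_trans (by positivity) (h.2.1 q hq)
    | (j+1) =>
      have := ih h.2.2 j (by simpa using hj) q hq
      simp only [List.take_succ_cons, dsum_cons]
      omega

lemma goodFrom_insert {P : PopulationProtocol Q X} {A : Finset Q} {a : Q} :
    ∀ {σ : List (Tr Q)} {v : Q → ℤ}, GoodFrom P A v σ →
      2 * (σ.length : ℤ) ≤ v a → GoodFrom P (insert a A) v σ := by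
  intro σ
  induction σ with
  | nil => intro v _ _; trivial
  | cons t σ ih =>
    intro v h ha
    refine ⟨h.1, ?_, ?_⟩
    · intro q hq
      rcases Finset.mem_insert.mp hq with rfl | hq'
      · have := count_fst_le P h.1 q
        have hc : ((Multiset.count q t.1 : ℕ) : ℤ) ≤ 2 := by exact_mod_cast this
        simp only [List.length_cons] at ha
        push_cast at ha
        omega
      · exact h.2.1 q hq'
    · apply ih h.2.2
      have := displ_ge P h.1 a
      simp only [List.length_cons] at ha
      push_cast at ha ⊢
      omega

lemma goodFrom_cap {P : PopulationProtocol Q X} {A : Finset Q} :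
    ∀ {σ : List (Tr Q)} {v w : Q → ℤ}, GoodFrom P A v σ →
      (∀ q ∈ A, min (v q) (2 * (σ.length : ℤ) + 1) ≤ w q) →
      GoodFrom P A w σ ∧ ∀ q ∈ A, min (v q + dsum σ q) 1 ≤ w q + dsum σ q := by
  intro σ
  induction σ with
  | nil =>
    intro v w _ hmin
    refine ⟨trivial, fun q hq => ?_⟩
    have := hmin q hq
    simp only [List.length_nil, Nat.cast_zero, mul_zero, zero_add] at this
    simpa using this
  | cons t σ ih =>
    intro v w h hmin
    have hd : ∀ q, (-2 : ℤ) ≤ displ t q := displ_ge P h.1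
    have hmin' : ∀ q ∈ A,
        min (v q + displ t q) (2 * (σ.length : ℤ) + 1) ≤ w q + displ t q := by
      intro q hq
      have h1 := hmin q hq
      have h2 := hd q
      simp only [List.length_cons] at h1
      push_cast at h1
      omega
    obtain ⟨hg, hfin⟩ := ih h.2.2 hmin'
    refine ⟨⟨h.1, ?_, hg⟩, ?_⟩
    · intro q hq
      have h1 := hmin q hq
      have h2 := h.2.1 q hq
      have h3 : ((Multiset.count q t.1 : ℕ) : ℤ) ≤ 2 := by exact_mod_cast count_fst_le P h.1 q
      simp only [List.length_cons] at h1
      push_cast at h1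
      omega
    · intro q hq
      have := hfin q hq
      simp only [dsum_cons]
      omega

lemma goodFrom_of_fireSeq {P : PopulationProtocol Q X} {A : Finset Q} :
    ∀ {σ : List (Tr Q)} {C C' : Multiset Q}, P.FireSeq σ C C' →
      GoodFrom P A (fun q => (Multiset.count q C : ℤ)) σ := by
  intro σ
  induction σ with
  | nil => intro C C' _; trivial
  | cons t σ ih =>
    intro C C' h
    obtain ⟨D, hst, hfs⟩ := h
    refine ⟨hst.1, ?_, ?_⟩
    · intro q _
      have h1 : ((Multiset.count q t.1 : ℕ) : ℤ) ≤ ((Multiset.count q C : ℕ) : ℤ) := by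
        exact_mod_cast Multiset.le_iff_count.mp hst.2.1 q
      exact h1
    · exact goodFrom_congr (fun q _ => (stepT_count hst q)) (ih hfs)

lemma fireSeq_of_goodFrom {P : PopulationProtocol Q X} {A : Finset Q}
    (huniv : ∀ q : Q, q ∈ A) :
    ∀ {σ : List (Tr Q)} {C : Multiset Q},
      GoodFrom P A (fun q => (Multiset.count q C : ℤ)) σ →
      ∃ C', P.FireSeq σ C C' := by
  intro σ
  induction σ with
  | nil => intro C _; exact ⟨C, rfl⟩
  | cons t σ ih =>
    intro C h
    have hle : t.1 ≤ C := by
      rw [Multiset.le_iff_count]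
      intro q
      have h1 : ((Multiset.count q t.1 : ℕ) : ℤ) ≤ ((Multiset.count q C : ℕ) : ℤ) :=
        h.2.1 q (huniv q)
      exact_mod_cast h1
    have hst : P.StepT t C (C - t.1 + t.2) := ⟨h.1, hle, rfl⟩
    have hcong : ∀ q ∈ A,
        (fun q => (Multiset.count q C : ℤ) + displ t q) q
          = (fun q => (Multiset.count q (C - t.1 + t.2) : ℤ)) q := by
      intro q _
      exact (stepT_count hst q).symm
    obtain ⟨C', hC'⟩ := ih (goodFrom_congr hcong h.2.2)
    exact ⟨C', _, hst, hC'⟩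

end PPAux
namespace PPAux

variable {Q X : Type} [DecidableEq Q]

/-- Rackoff's length-bounding function. -/
def fR : ℕ → ℕ
  | 0 => 0
  | (i+1) => (2 * fR i + 2) ^ (i+1) + fR i

lemma fR_succ (i : ℕ) : fR (i+1) = (2 * fR i + 2) ^ (i+1) + fR i := rfl

lemma fR_bound (i : ℕ) : fR i + 1 ≤ 2 ^ (2*i+1).factorial := by
  induction i with
  | zero => simp [fR]
  | succ i ih =>
    set k := (2*i+1).factorial with hk
    have hk1 : 1 ≤ k := Nat.factorial_pos _
    have h1 : 2 * fR i + 2 ≤ 2 ^ (k+1) := by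
      have : 2 * (fR i + 1) ≤ 2 * 2 ^ k := by omega
      calc 2 * fR i + 2 = 2 * (fR i + 1) := by ring
        _ ≤ 2 * 2 ^ k := this
        _ = 2 ^ (k+1) := by ring
    have h2 : (2 * fR i + 2) ^ (i+1) ≤ 2 ^ ((k+1)*(i+1)) := by
      calc (2 * fR i + 2) ^ (i+1) ≤ (2 ^ (k+1)) ^ (i+1) := Nat.pow_le_pow_left h1 _
        _ = 2 ^ ((k+1)*(i+1)) := by rw [← pow_mul]
    have h3 : fR i + 1 ≤ 2 ^ ((k+1)*(i+1)) := by
      refine le_trans ih (Nat.pow_le_pow_right (by norm_num) ?_)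
      calc k ≤ (k+1) * 1 := by omega
        _ ≤ (k+1) * (i+1) := Nat.mul_le_mul_left _ (by omega)
    have h4 : fR (i+1) + 1 ≤ 2 ^ ((k+1)*(i+1) + 1) := by
      rw [fR_succ]
      calc (2 * fR i + 2) ^ (i+1) + fR i + 1
          ≤ 2 ^ ((k+1)*(i+1)) + 2 ^ ((k+1)*(i+1)) := by omega
        _ = 2 ^ ((k+1)*(i+1) + 1) := by ring
    refine le_trans h4 (Nat.pow_le_pow_right (by norm_num) ?_)
    have hfact : (2*(i+1)+1).factorial = (2*i+3) * ((2*i+2) * k) := by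
      have e1 : 2*(i+1)+1 = (2*i+2)+1 := by ring
      have e2 : (2*i+2) = (2*i+1)+1 := by ring
      rw [e1, Nat.factorial_succ, e2, Nat.factorial_succ, hk]
    rw [hfact]
    calc (k+1)*(i+1)+1 ≤ (2*k)*(i+1)+1 :=
          Nat.add_le_add_right (Nat.mul_le_mul_right _ (by omega)) 1
      _ = (2*i+2)*k + 1 := by ring
      _ ≤ (2*i+3)*k := by have h5 : (2*i+3)*k = (2*i+2)*k + k := by ring
                          omega
      _ ≤ (2*i+3)*((2*i+2)*k) := Nat.mul_le_mul_left _ (by nlinarith)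

lemma fR_final_bound (n : ℕ) : 2 * fR n + 1 ≤ 2 ^ (2 * (2*n+1).factorial + 1) := by
  have h1 := fR_bound n
  have h2 : 2 * fR n + 1 ≤ 2 ^ ((2*n+1).factorial + 1) := by
    calc 2 * fR n + 1 ≤ 2 * (fR n + 1) := by omega
      _ ≤ 2 * 2 ^ ((2*n+1).factorial) := by omega
      _ = 2 ^ ((2*n+1).factorial + 1) := by ring
  refine le_trans h2 (Nat.pow_le_pow_right (by norm_num) ?_)
  have := Nat.factorial_pos (2*n+1)
  omega

/-- Rackoff's theorem: every good run can be replaced by a short good run which ends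
with every `A`-coordinate at least `min (original final value) 1`. -/
lemma rackoff (P : PopulationProtocol Q X) :
    ∀ (N : ℕ) (A : Finset Q), A.card ≤ N → ∀ (v : Q → ℤ) (σ : List (Tr Q)),
      GoodFrom P A v σ →
      ∃ σ', GoodFrom P A v σ' ∧ σ'.length ≤ fR A.card ∧
        ∀ q ∈ A, min (v q + dsum σ q) 1 ≤ v q + dsum σ' q := by
  intro N
  induction N with
  | zero =>
    intro A hA v σ _
    have hA0 : A = ∅ := Finset.card_eq_zero.mp (Nat.le_zero.mp hA)
    subst hA0
    exact ⟨[], trivial, by simp [fR], fun q hq => absurd hq (by simp)⟩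
  | succ N IH =>
    intro A hA v
    suffices h : ∀ (L : ℕ) (σ : List (Tr Q)), σ.length ≤ L → GoodFrom P A v σ →
        ∃ σ', GoodFrom P A v σ' ∧ σ'.length ≤ fR A.card ∧
          ∀ q ∈ A, min (v q + dsum σ q) 1 ≤ v q + dsum σ' q by
      intro σ hσ; exact h σ.length σ le_rfl hσ
    intro L
    induction L with
    | zero =>
      intro σ hlen hσ
      exact ⟨σ, hσ, by omega, fun q _ => min_le_left _ _⟩
    | succ L IHL =>
      intro σ hlen hσ
      by_cases hsmall : σ.length ≤ fR A.card
      · exact ⟨σ, hσ, hsmall, fun q _ => min_le_left _ _⟩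
      rcases Nat.eq_zero_or_pos A.card with hA0 | hApos
      · have hAe : A = ∅ := Finset.card_eq_zero.mp hA0
        subst hAe
        exact ⟨[], trivial, by simp [fR], fun q hq => absurd hq (by simp)⟩
      obtain ⟨i, hi⟩ : ∃ i, A.card = i + 1 := ⟨A.card - 1, by omega⟩
      set r : ℕ := 2 * fR i + 2 with hr
      set R : ℕ := r ^ (i+1) with hR
      have hfA : fR A.card = R + fR i := by rw [hi, fR_succ]
      have hlenR : R < σ.length := by omega
      by_cases hbig : ∃ t ≤ R, ∃ a ∈ A, (r : ℤ) ≤ v a + dsum (σ.take t) a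
      · -- Case a: some coordinate gets large early; drop it and use the outer IH.
        obtain ⟨t, htR, a, haA, hra⟩ := hbig
        have htlen : t ≤ σ.length := by omega
        have hdec := (goodFrom_append (P := P) (A := A)
          (σ₁ := σ.take t) (σ₂ := σ.drop t) (v := v)).mp
          (by rw [List.take_append_drop]; exact hσ)
        set vt : Q → ℤ := fun q => v q + dsum (σ.take t) q with hvt
        have h1 : GoodFrom P A v (σ.take t) := hdec.1
        have h2 : GoodFrom P A vt (σ.drop t) := hdec.2
        set A' : Finset Q := A.erase a with hA'
        have hA'card : A'.card = i := by
          rw [hA', Finset.card_erase_of_mem haA, hi]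
          omega
        have h2' : GoodFrom P A' vt (σ.drop t) := goodFrom_mono (Finset.erase_subset _ _) h2
        obtain ⟨σ₂, hg₂, hlen₂, hfin₂⟩ := IH A' (by omega) vt (σ.drop t) h2'
        rw [hA'card] at hlen₂
        have hσ₂T : ∀ t' ∈ σ₂, t' ∈ P.T := goodFrom_mem hg₂
        have hg₂' : GoodFrom P A vt σ₂ := by
          have hins : insert a A' = A := Finset.insert_erase haA
          rw [← hins]
          refine goodFrom_insert hg₂ ?_
          have hc : (σ₂.length : ℤ) ≤ (fR i : ℤ) := by exact_mod_cast hlen₂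
          have : ((r : ℕ) : ℤ) = 2 * (fR i : ℤ) + 2 := by rw [hr]; push_cast; ring
          have hvta : vt a = v a + dsum (σ.take t) a := rfl
          omega
        refine ⟨σ.take t ++ σ₂, ?_, ?_, ?_⟩
        · exact goodFrom_append.mpr ⟨h1, hg₂'⟩
        · rw [List.length_append, List.length_take]
          omega
        · intro q hq
          have hds : dsum σ q = dsum (σ.take t) q + dsum (σ.drop t) q := by
            conv_lhs => rw [← List.take_append_drop t σ]
            rw [dsum_append]
          rw [dsum_append, hds]
          by_cases hqa : q = a
          · subst hqa
            have hge := dsum_ge P hσ₂T q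
            have hc : (σ₂.length : ℤ) ≤ (fR i : ℤ) := by exact_mod_cast hlen₂
            have hrc : ((r : ℕ) : ℤ) = 2 * (fR i : ℤ) + 2 := by rw [hr]; push_cast; ring
            have := min_le_right (v q + (dsum (σ.take t) q + dsum (σ.drop t) q)) 1
            omega
          · have hq' : q ∈ A' := Finset.mem_erase.mpr ⟨hqa, hq⟩
            have := hfin₂ q hq'
            simp only [hvt] at this
            omega
      · -- Case b: all coordinates stay below r for the first R+1 steps; use pigeonhole.
        push_neg at hbig
        have key : ∀ s₁ s₂ : ℕ, s₁ < s₂ → s₂ ≤ R →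
            (∀ a ∈ A, dsum (σ.take s₁) a = dsum (σ.take s₂) a) →
            ∃ σ', GoodFrom P A v σ' ∧ σ'.length ≤ fR A.card ∧
              ∀ q ∈ A, min (v q + dsum σ q) 1 ≤ v q + dsum σ' q := by
          intro s₁ s₂ hs12 hs₂R heqA
          have hs₂len : s₂ ≤ σ.length := by omega
          have hdec₁ := (goodFrom_append (P := P) (A := A)
            (σ₁ := σ.take s₁) (σ₂ := σ.drop s₁) (v := v)).mp
            (by rw [List.take_append_drop]; exact hσ)
          have hdec₂ := (goodFrom_append (P := P) (A := A)
            (σ₁ := σ.take s₂) (σ₂ := σ.drop s₂) (v := v)).mp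
            (by rw [List.take_append_drop]; exact hσ)
          have hgd : GoodFrom P A (fun q => v q + dsum (σ.take s₁) q) (σ.drop s₂) :=
            goodFrom_congr (fun q hq => by rw [heqA q hq]) hdec₂.2
          have hgood' : GoodFrom P A v (σ.take s₁ ++ σ.drop s₂) :=
            goodFrom_append.mpr ⟨hdec₁.1, hgd⟩
          have hlen' : (σ.take s₁ ++ σ.drop s₂).length ≤ L := by
            rw [List.length_append, List.length_take, List.length_drop]
            omega
          obtain ⟨σ', hg', hl', hf'⟩ := IHL _ hlen' hgood'
          refine ⟨σ', hg', hl', fun q hq => ?_⟩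
          have hds : dsum σ q = dsum (σ.take s₂) q + dsum (σ.drop s₂) q := by
            conv_lhs => rw [← List.take_append_drop s₂ σ]
            rw [dsum_append]
          have := hf' q hq
          rw [dsum_append] at this
          rw [hds]
          rw [heqA q hq] at this
          omega
        -- pigeonhole
        by_cases hAne : A.Nonempty
        · have hnn : ∀ t : ℕ, t ≤ R → ∀ a ∈ A, 0 ≤ v a + dsum (σ.take t) a := by
            intro t ht a ha
            exact goodFrom_nonneg hσ t (by omega) a ha
          have hrpos : 0 < r := by omega
          set φ : Fin (R+1) → (A → Fin r) := fun t a =>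
            ⟨(v a.1 + dsum (σ.take t.1) a.1).toNat, by
              have h1 := hbig t.1 (by omega) a.1 a.2
              have h2 := hnn t.1 (by omega) a.1 a.2
              omega⟩ with hφ
          have hcard : Fintype.card (A → Fin r) < Fintype.card (Fin (R+1)) := by
            rw [Fintype.card_fun, Fintype.card_fin, Fintype.card_fin, Fintype.card_coe, hi]
            omega
          obtain ⟨t₁, t₂, hne, heq⟩ := Fintype.exists_ne_map_eq_of_card_lt φ hcard
          have heqA : ∀ (u₁ u₂ : Fin (R+1)), φ u₁ = φ u₂ →
              ∀ a ∈ A, dsum (σ.take u₁.1) a = dsum (σ.take u₂.1) a := by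
            intro u₁ u₂ he a ha
            have h1 := congrFun he ⟨a, ha⟩
            have h2 := hnn u₁.1 (by omega) a ha
            have h3 := hnn u₂.1 (by omega) a ha
            have h4 : (v a + dsum (σ.take u₁.1) a).toNat
              = (v a + dsum (σ.take u₂.1) a).toNat := congrArg Fin.val h1
            omega
          rcases lt_or_gt_of_ne hne with hlt | hgt
          · exact key t₁.1 t₂.1 hlt (by omega) (heqA t₁ t₂ heq)
          · exact key t₂.1 t₁.1 hgt (by omega) (heqA t₂ t₁ heq.symm)
        · rw [Finset.not_nonempty_iff_eq_empty] at hAne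
          subst hAne
          simp at hApos

end PPAux
namespace PPAux

variable {Q X : Type} [DecidableEq Q]

lemma count_sum_repl [Fintype Q] (g : Q → ℕ) (p : Q) :
    Multiset.count p (∑ q ∈ Finset.univ, Multiset.replicate (g q) q) = g p := by
  classical
  rw [Multiset.count_sum']
  rw [Finset.sum_eq_single p]
  · simp [Multiset.count_replicate]
  · intro b _ hb
    simp [Multiset.count_replicate, hb]
  · intro h
    exact absurd (Finset.mem_univ p) h

lemma covers_small [Fintype Q] (P : PopulationProtocol Q X) {C : Multiset Q} {q₀ : Q}
    (h : Covers P C q₀) :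
    ∃ m : Multiset Q, m ≤ C ∧
      (∀ q, Multiset.count q m ≤ 2 * fR (Fintype.card Q) + 1) ∧ Covers P m q₀ := by
  classical
  obtain ⟨C', hr, hq₀⟩ := h
  obtain ⟨σ, hfs⟩ := reach_fireSeq hr
  have hgood : GoodFrom P Finset.univ (fun q => (Multiset.count q C : ℤ)) σ :=
    goodFrom_of_fireSeq hfs
  obtain ⟨σ', hg', hlen', hfin'⟩ :=
    rackoff P (Fintype.card Q) Finset.univ (le_of_eq Finset.card_univ) _ σ hgood
  rw [Finset.card_univ] at hlen'
  set ℓ := σ'.length with hℓ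
  set m : Multiset Q :=
    ∑ q ∈ Finset.univ, Multiset.replicate (min (Multiset.count q C) (2*ℓ+1)) q with hm
  have hcm : ∀ p, Multiset.count p m = min (Multiset.count p C) (2*ℓ+1) := by
    intro p; rw [hm]; exact count_sum_repl _ p
  have hcap := goodFrom_cap (w := fun q => (Multiset.count q m : ℤ)) hg' (by
    intro q _
    show ((Multiset.count q C : ℤ)) ⊓ (2 * (σ'.length : ℤ) + 1) ≤ ((Multiset.count q m : ℤ))
    rw [hcm q]
    push_cast
    omega)
  obtain ⟨hgm, hfinm⟩ := hcap
  obtain ⟨m', hfs'⟩ := fireSeq_of_goodFrom (fun q => Finset.mem_univ q) hgm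
  have hc1 : (Multiset.count q₀ C' : ℤ) = Multiset.count q₀ C + dsum σ q₀ :=
    fireSeq_count hfs q₀
  have hc2 : (Multiset.count q₀ m' : ℤ) = Multiset.count q₀ m + dsum σ' q₀ :=
    fireSeq_count hfs' q₀
  have hq₀C' : 1 ≤ Multiset.count q₀ C' := Multiset.one_le_count_iff_mem.mpr hq₀
  have hf1 : min ((Multiset.count q₀ C : ℤ) + dsum σ q₀) 1
      ≤ (Multiset.count q₀ C : ℤ) + dsum σ' q₀ := hfin' q₀ (Finset.mem_univ q₀)
  have hf2 : min ((Multiset.count q₀ C : ℤ) + dsum σ' q₀) 1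
      ≤ (Multiset.count q₀ m : ℤ) + dsum σ' q₀ := hfinm q₀ (Finset.mem_univ q₀)
  refine ⟨m, ?_, ?_, ⟨m', fireSeq_reach hfs', ?_⟩⟩
  · rw [Multiset.le_iff_count]
    intro q
    rw [hcm q]
    omega
  · intro q
    rw [hcm q]
    omega
  · rw [← Multiset.one_le_count_iff_mem]
    have h1 : (1:ℤ) ≤ (Multiset.count q₀ C' : ℤ) := by exact_mod_cast hq₀C'
    have : (1:ℤ) ≤ (Multiset.count q₀ m' : ℤ) := by omega
    exact_mod_cast this

end PPAux
namespace PPAux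

def fseq {α : Type} [Inhabited α] (blk : α → ℕ → List α) (init : α × List α × ℕ) :
    ℕ → α × List α × ℕ
  | 0 => init
  | (i+1) =>
    match fseq blk init i with
    | (X, [], j) => ((blk X j).headI, (blk X j).tail, j + 1)
    | (_, c :: rest, j) => (c, rest, j)

variable {α : Type} [Inhabited α] {blk : α → ℕ → List α} {init : α × List α × ℕ}

lemma fseq_succ (i : ℕ) : fseq blk init (i+1) =
    match fseq blk init i with
    | (X, [], j) => ((blk X j).headI, (blk X j).tail, j + 1)
    | (_, c :: rest, j) => (c, rest, j) := rfl

lemma fseq_succ_nil {i : ℕ} {X : α} {j : ℕ} (h : fseq blk init i = (X, [], j)) :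
    fseq blk init (i+1) = ((blk X j).headI, (blk X j).tail, j + 1) := by
  rw [fseq_succ, h]

lemma fseq_succ_cons {i : ℕ} {X c : α} {rest : List α} {j : ℕ}
    (h : fseq blk init i = (X, c :: rest, j)) :
    fseq blk init (i+1) = (c, rest, j) := by
  rw [fseq_succ, h]

variable {Q X : Type} [DecidableEq Q]

lemma reach_chain' {P : PopulationProtocol Q X} {C C' : Multiset Q} (h : P.Reach C C') :
    ∃ l : List (Multiset Q), List.Chain P.Step C l ∧ (C :: l).getLast? = some C' := by
  induction h using Relation.ReflTransGen.head_induction_on with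
  | refl => exact ⟨[], List.Chain.nil, rfl⟩
  | head hstep _ ih =>
    obtain ⟨l, hc, hl⟩ := ih
    exact ⟨_ :: l, List.chain_cons.mpr ⟨hstep, hc⟩, by rw [List.getLast?_cons_cons]; exact hl⟩

lemma step_exists (P : PopulationProtocol Q X) {C : Multiset Q} (h2 : 2 ≤ Multiset.card C) :
    ∃ C', P.Step C C' := by
  obtain ⟨p, hp⟩ := (Multiset.card_pos_iff_exists_mem (s := C)).mp (by omega)
  obtain ⟨C₁, rfl⟩ := Multiset.exists_cons_of_mem hp
  have h1 : 0 < Multiset.card C₁ := by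
    rw [Multiset.card_cons] at h2; omega
  obtain ⟨q, hq⟩ := Multiset.card_pos_iff_exists_mem.mp h1
  obtain ⟨C₂, rfl⟩ := Multiset.exists_cons_of_mem hq
  obtain ⟨t, ht, ht1⟩ := P.total p q
  have hle : t.1 ≤ p ::ₘ q ::ₘ C₂ := by
    rw [ht1]
    have he : ({p, q} : Multiset Q) = p ::ₘ q ::ₘ 0 := rfl
    rw [he]
    exact Multiset.cons_le_cons _ (Multiset.cons_le_cons _ (Multiset.zero_le _))
  exact ⟨_, t, ht, hle, rfl⟩

lemma build_fair (P : PopulationProtocol Q X) (Cinf : Multiset Q) (g : ℕ → Multiset Q)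
    (blk : Multiset Q → Multiset Q → List (Multiset Q))
    (C₀ : Multiset Q) (l₀ : List (Multiset Q))
    (hg : ∀ j, P.Reach Cinf (g j))
    (hgInf : ∀ C, P.Reach Cinf C → ∀ N, ∃ j, N ≤ j ∧ g j = C)
    (hblk : ∀ Y G, P.Reach Cinf Y → P.Reach Cinf G →
      blk Y G ≠ [] ∧ List.Chain P.Step Y (blk Y G) ∧ (blk Y G).getLast? = some G)
    (hl₀ : List.Chain P.Step C₀ l₀) (hl₀l : (C₀ :: l₀).getLast? = some Cinf) :
    ∃ σ : ℕ → Multiset Q, σ 0 = C₀ ∧ P.IsExecution σ ∧ P.Fair σ ∧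
      ∀ C', P.Reach Cinf C' → ∀ N, ∃ i, N ≤ i ∧ σ i = C' := by
  classical
  set bl : Multiset Q → ℕ → List (Multiset Q) := fun Y j => blk Y (g j) with hbl
  set F : ℕ → Multiset Q × List (Multiset Q) × ℕ := fseq bl (C₀, l₀, 0) with hF
  set tgt : ℕ → Multiset Q := fun j => if j = 0 then Cinf else g (j-1) with htgt
  have htgtK : ∀ j, P.Reach Cinf (tgt j) := by
    intro j
    rw [htgt]
    dsimp only
    split
    · exact Relation.ReflTransGen.refl
    · exact hg _
  have htgtsucc : ∀ j, tgt (j+1) = g j := by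
    intro j; rw [htgt]; simp
  -- invariant
  have hInv : ∀ i, List.Chain P.Step (F i).1 (F i).2.1 ∧
      ((F i).1 :: (F i).2.1).getLast? = some (tgt (F i).2.2) := by
    intro i
    induction i with
    | zero =>
      refine ⟨hl₀, ?_⟩
      rw [hF]
      show (C₀ :: l₀).getLast? = some (tgt 0)
      rw [hl₀l, htgt]
      simp
    | succ i ih =>
      rcases hFi : F i with ⟨Y, rest, j⟩
      rw [hFi] at ih
      cases rest with
      | nil =>
        have hYt : Y = tgt j := by
          have := ih.2
          simp only [List.getLast?_singleton, Option.some.injEq] at this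
          exact this
        have hbs := hblk Y (g j) (hYt ▸ htgtK j) (hg j)
        obtain ⟨c, l', hcl⟩ := List.exists_cons_of_ne_nil hbs.1
        have hnext : F (i+1) = ((bl Y j).headI, (bl Y j).tail, j + 1) := by
          rw [hF]
          exact fseq_succ_nil (by rw [← hF]; exact hFi)
        have hblY : bl Y j = c :: l' := by rw [hbl]; exact hcl
        rw [hnext, hblY]
        simp only [List.headI, List.tail]
        constructor
        · have := hbs.2.1
          rw [hcl] at this
          exact (List.chain_cons.mp this).2
        · have := hbs.2.2
          rw [hcl] at this
          rw [htgtsucc j]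
          exact this
      | cons c rest' =>
        have hnext : F (i+1) = (c, rest', j) := by
          rw [hF]
          exact fseq_succ_cons (by rw [← hF]; exact hFi)
        rw [hnext]
        refine ⟨(List.chain_cons.mp ih.1).2, ?_⟩
        have := ih.2
        rw [List.getLast?_cons_cons] at this
        exact this
  -- the execution
  set σ : ℕ → Multiset Q := fun i => (F i).1 with hσ
  have hexec : P.IsExecution σ := by
    intro i
    rcases hFi : F i with ⟨Y, rest, j⟩
    have ih := hInv i
    rw [hFi] at ih
    show P.Step (F i).1 (F (i+1)).1
    cases rest with
    | nil =>
      have hYt : Y = tgt j := by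
        have := ih.2
        simp only [List.getLast?_singleton, Option.some.injEq] at this
        exact this
      have hbs := hblk Y (g j) (hYt ▸ htgtK j) (hg j)
      obtain ⟨c, l', hcl⟩ := List.exists_cons_of_ne_nil hbs.1
      have hnext : F (i+1) = ((bl Y j).headI, (bl Y j).tail, j + 1) := by
        rw [hF]
        exact fseq_succ_nil (by rw [← hF]; exact hFi)
      have hblY : bl Y j = c :: l' := by rw [hbl]; exact hcl
      rw [hFi, hnext, hblY]
      have := hbs.2.1
      rw [hcl] at this
      exact (List.chain_cons.mp this).1
    | cons c rest' =>
      have hnext : F (i+1) = (c, rest', j) := by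
        rw [hF]
        exact fseq_succ_cons (by rw [← hF]; exact hFi)
      rw [hFi, hnext]
      exact (List.chain_cons.mp ih.1).1
  -- rest empties over and over
  have hEmpty : ∀ i, ∃ d, (F (i + d)).2.1 = [] := by
    have haux : ∀ n i, (F i).2.1.length ≤ n → ∃ d, (F (i + d)).2.1 = [] := by
      intro n
      induction n with
      | zero =>
        intro i h
        exact ⟨0, by simp only [Nat.add_zero]; exact List.eq_nil_of_length_eq_zero (Nat.le_zero.mp h)⟩
      | succ n ihn =>
        intro i h
        rcases hFi : F i with ⟨Y, rest, j⟩
        cases rest with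
        | nil => exact ⟨0, by show (F (i+0)).2.1 = []; rw [show i + 0 = i from rfl, hFi]⟩
        | cons c rest' =>
          have hnext : F (i+1) = (c, rest', j) := by
            rw [hF]
            exact fseq_succ_cons (by rw [← hF]; exact hFi)
          have hlen : (F (i+1)).2.1.length ≤ n := by
            rw [hnext]
            rw [hFi] at h
            simp only [List.length_cons] at h
            simpa using Nat.lt_succ_iff.mp (by omega)
          obtain ⟨d, hd⟩ := ihn (i+1) hlen
          exact ⟨d + 1, by rw [show i + (d+1) = (i+1) + d by omega]; exact hd⟩
    intro i
    exact haux (F i).2.1.length i le_rfl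
  -- counter facts
  have hIncr : ∀ i, (F i).2.1 = [] → (F (i+1)).2.2 = (F i).2.2 + 1 := by
    intro i h
    rcases hFi : F i with ⟨Y, rest, j⟩
    rw [hFi] at h
    subst h
    have hnext : F (i+1) = ((bl Y j).headI, (bl Y j).tail, j + 1) := by
      rw [hF]
      exact fseq_succ_nil (by rw [← hF]; exact hFi)
    simp [hnext, hFi]
  have hNoInc : ∀ i d, (∀ e, e < d → (F (i + e)).2.1 ≠ []) → (F (i + d)).2.2 = (F i).2.2 := by
    intro i d
    induction d with
    | zero => intro _; rfl
    | succ d ihd =>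
      intro hne
      rcases hFi : F (i + d) with ⟨Y, rest, j⟩
      cases rest with
      | nil => exact absurd (by rw [hFi]) (hne d (by omega))
      | cons c rest' =>
        have hnext : F (i + d + 1) = (c, rest', j) := by
          rw [hF]
          exact fseq_succ_cons (by rw [← hF]; exact hFi)
        have h1 : (F (i + (d+1))).2.2 = j := by
          rw [show i + (d+1) = i + d + 1 by omega, hnext]
        have h2 : (F (i + d)).2.2 = j := by rw [hFi]
        rw [h1, ← h2]
        exact ihd (fun e he => hne e (by omega))
  have hEmptyCnt : ∀ j, ∃ i, j ≤ i ∧ (F i).2.1 = [] ∧ (F i).2.2 = j := by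
    intro j
    induction j with
    | zero =>
      have hex : ∃ d, (F (0 + d)).2.1 = [] := hEmpty 0
      refine ⟨Nat.find hex, Nat.zero_le _, ?_, ?_⟩
      · have := Nat.find_spec hex
        rwa [Nat.zero_add] at this
      · have h1 : (F (0 + Nat.find hex)).2.2 = (F 0).2.2 :=
          hNoInc 0 (Nat.find hex) (fun e he => Nat.find_min hex he)
        rw [Nat.zero_add] at h1
        rw [h1]
        rfl
    | succ j ihj =>
      obtain ⟨i, hij, hrest, hcnt⟩ := ihj
      have hstep : (F (i+1)).2.2 = j + 1 := by rw [hIncr i hrest, hcnt]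
      have hex : ∃ d, (F ((i+1) + d)).2.1 = [] := hEmpty (i+1)
      refine ⟨(i+1) + Nat.find hex, by omega, Nat.find_spec hex, ?_⟩
      have h1 : (F ((i+1) + Nat.find hex)).2.2 = (F (i+1)).2.2 :=
        hNoInc (i+1) (Nat.find hex) (fun e he => Nat.find_min hex he)
      rw [h1, hstep]
  have hAtEmpty : ∀ i, (F i).2.1 = [] → (F i).1 = tgt ((F i).2.2) := by
    intro i h
    have h2 := (hInv i).2
    rw [h] at h2
    simp only [List.getLast?_singleton, Option.some.injEq] at h2
    exact h2
  have hHit : ∀ C, P.Reach Cinf C → ∀ N, ∃ i, N ≤ i ∧ σ i = C := by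
    intro C hC N
    obtain ⟨j, hjN, hjC⟩ := hgInf C hC N
    obtain ⟨i, hi, hrest, hcnt⟩ := hEmptyCnt (j+1)
    refine ⟨i, by omega, ?_⟩
    have h3 := hAtEmpty i hrest
    show (F i).1 = C
    rw [h3, hcnt, htgtsucc j, hjC]
  obtain ⟨i₀, _, hre₀, _⟩ := hEmptyCnt 0
  have hentry : ∀ i, i₀ ≤ i → P.Reach Cinf (σ i) := by
    intro i hi
    induction i, hi using Nat.le_induction with
    | base =>
      have h3 := hAtEmpty i₀ hre₀
      show P.Reach Cinf (F i₀).1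
      rw [h3]
      exact htgtK _
    | succ i hi ih =>
      exact Relation.ReflTransGen.tail ih (hexec i)
  have hfair : P.Fair σ := by
    intro C hC N
    obtain ⟨i, hi, hr⟩ := hC i₀
    have hCK : P.Reach Cinf C := Relation.ReflTransGen.trans (hentry i hi) hr
    exact hHit C hCK N
  exact ⟨σ, rfl, hexec, hfair, fun C' h' N => hHit C' h' N⟩

end PPAux
namespace PPAux

variable {Q : Type} [DecidableEq Q]

lemma multiset_card_finite [Fintype Q] (s : ℕ) :
    {C : Multiset Q | Multiset.card C = s}.Finite := by
  classical
  apply Set.Finite.of_finite_image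
    (f := fun C => fun q : Q => (⟨min (Multiset.count q C) s, by omega⟩ : Fin (s+1)))
  · exact Set.Finite.subset Set.finite_univ (Set.subset_univ _)
  · intro C₁ h₁ C₂ h₂ he
    have h₁' : Multiset.card C₁ = s := h₁
    have h₂' : Multiset.card C₂ = s := h₂
    apply Multiset.ext.mpr
    intro q
    have c1 : Multiset.count q C₁ ≤ s := h₁' ▸ Multiset.count_le_card q C₁
    have c2 : Multiset.count q C₂ ≤ s := h₂' ▸ Multiset.count_le_card q C₂
    have e2 := congrArg Fin.val (congrFun he q)
    simp only at e2
    omega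

lemma exists_fair_exec [Fintype Q] (P : PopulationProtocol Q Unit) {C₀ D : Multiset Q}
    (h2 : 2 ≤ Multiset.card C₀) (hD : P.Reach C₀ D) :
    ∃ (σ : ℕ → Multiset Q) (Cinf : Multiset Q),
      σ 0 = C₀ ∧ P.IsExecution σ ∧ P.Fair σ ∧ P.Reach D Cinf ∧
      ∀ C', P.Reach Cinf C' → ∀ N, ∃ i, N ≤ i ∧ σ i = C' := by
  classical
  have hRfin : {C | P.Reach D C}.Finite :=
    (multiset_card_finite (Multiset.card D)).subset (fun C hC => reach_card hC)
  obtain ⟨Cinf, hCinfmem, hmin⟩ := Finset.exists_min_image hRfin.toFinset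
      (fun C => {C' | P.Reach C C'}.ncard)
      ⟨D, by rw [Set.Finite.mem_toFinset]; exact Relation.ReflTransGen.refl⟩
  rw [Set.Finite.mem_toFinset] at hCinfmem
  have hCinfR : P.Reach D Cinf := hCinfmem
  have hFsub : ∀ E : Multiset Q, P.Reach D E →
      {C' | P.Reach E C'} ⊆ {C' | P.Reach D C'} :=
    fun E hE C' hC' => Relation.ReflTransGen.trans hE hC'
  have hbot : ∀ C', P.Reach Cinf C' → P.Reach C' Cinf := by
    intro C' h'
    by_contra hnot
    have hDC' : P.Reach D C' := Relation.ReflTransGen.trans hCinfR h'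
    have hsub : {Z | P.Reach C' Z} ⊆ {Z | P.Reach Cinf Z} :=
      fun Z hZ => Relation.ReflTransGen.trans h' hZ
    have hne : {Z | P.Reach C' Z} ≠ {Z | P.Reach Cinf Z} := by
      intro he
      have hmm : Cinf ∈ {Z | P.Reach C' Z} := by
        rw [he]; exact Relation.ReflTransGen.refl
      exact hnot hmm
    have hss : {Z | P.Reach C' Z} ⊂ {Z | P.Reach Cinf Z} :=
      Set.ssubset_iff_subset_ne.mpr ⟨hsub, hne⟩
    have hfin : {Z | P.Reach Cinf Z}.Finite := hRfin.subset (hFsub Cinf hCinfR)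
    have hlt := Set.ncard_lt_ncard hss hfin
    have hge := hmin C' (by rw [Set.Finite.mem_toFinset]; exact hDC')
    omega
  have hcardinf : ∀ C', P.Reach Cinf C' → 2 ≤ Multiset.card C' := by
    intro C' h'
    rw [reach_card (Relation.ReflTransGen.trans (Relation.ReflTransGen.trans hD hCinfR) h')]
    exact h2
  have hKfin : {C | P.Reach Cinf C}.Finite := hRfin.subset (hFsub Cinf hCinfR)
  have hKlne : Cinf ∈ hKfin.toFinset.toList := by
    rw [Finset.mem_toList, Set.Finite.mem_toFinset]
    exact Relation.ReflTransGen.refl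
  have hKlpos : 0 < hKfin.toFinset.toList.length :=
    List.length_pos_iff.mpr (fun h => by rw [h] at hKlne; simp at hKlne)
  set Kl : List (Multiset Q) := hKfin.toFinset.toList with hKl
  set g : ℕ → Multiset Q := fun j => Kl.getD (j % Kl.length) Cinf with hg
  have hgK : ∀ j, P.Reach Cinf (g j) := by
    intro j
    have hlt : j % Kl.length < Kl.length := Nat.mod_lt _ hKlpos
    have : g j ∈ Kl := by
      rw [hg]
      dsimp only
      rw [List.getD_eq_getElem _ _ hlt]
      exact List.getElem_mem _
    rw [hKl, Finset.mem_toList, Set.Finite.mem_toFinset] at this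
    exact this
  have hgInf : ∀ C, P.Reach Cinf C → ∀ N, ∃ j, N ≤ j ∧ g j = C := by
    intro C hC N
    have hmem : C ∈ Kl := by
      rw [hKl, Finset.mem_toList, Set.Finite.mem_toFinset]; exact hC
    obtain ⟨⟨r, hr⟩, hget⟩ := List.mem_iff_get.mp hmem
    refine ⟨r + Kl.length * N, ?_, ?_⟩
    · have : N ≤ Kl.length * N := Nat.le_mul_of_pos_left N hKlpos
      omega
    · rw [hg]
      dsimp only
      rw [Nat.add_mul_mod_self_left, Nat.mod_eq_of_lt hr, List.getD_eq_getElem _ _ hr]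
      rw [← hget]
      rfl
  have hblkex : ∀ (Y G : Multiset Q), ∃ l : List (Multiset Q),
      P.Reach Cinf Y → P.Reach Cinf G →
      (l ≠ [] ∧ List.Chain P.Step Y l ∧ l.getLast? = some G) := by
    intro Y G
    by_cases hYG : P.Reach Cinf Y ∧ P.Reach Cinf G
    · obtain ⟨hY, hG⟩ := hYG
      obtain ⟨Z, hZ⟩ := step_exists P (hcardinf Y hY)
      have hZK : P.Reach Cinf Z := Relation.ReflTransGen.tail hY hZ
      have hZG : P.Reach Z G := Relation.ReflTransGen.trans (hbot Z hZK) hG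
      obtain ⟨l, hc, hl⟩ := reach_chain' hZG
      exact ⟨Z :: l, fun _ _ => ⟨List.cons_ne_nil _ _, List.chain_cons.mpr ⟨hZ, hc⟩, hl⟩⟩
    · exact ⟨[], fun h1 h2 => absurd ⟨h1, h2⟩ hYG⟩
  choose blk hblk using hblkex
  obtain ⟨l₀, hl₀, hl₀l⟩ := reach_chain' (Relation.ReflTransGen.trans hD hCinfR)
  obtain ⟨σ, h0, hex, hfair, hhit⟩ :=
    build_fair P Cinf g blk C₀ l₀ hgK hgInf (fun Y G hY hG => hblk Y G hY hG) hl₀ hl₀l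
  exact ⟨σ, Cinf, h0, hex, hfair, hCinfR, hhit⟩

end PPAux
namespace PPAux

variable {Q : Type} [DecidableEq Q]

lemma card_eq_sum_count [Fintype Q] (s : Multiset Q) :
    Multiset.card s = ∑ q ∈ Finset.univ, Multiset.count q s := by
  rw [← Multiset.toFinset_sum_count_eq]
  symm
  refine (Finset.sum_subset (Finset.subset_univ _) ?_).symm
  intro q _ hq
  rw [Multiset.count_eq_zero]
  simpa using hq

end PPAux

open PPAux

/-- for a leaderless protocol with `n` states computing some predicate,
`β = 2^(2(2n+1)!+1)`, `k ≥ 1` and `a = k·n·β`, any `D` reachable from `IC(a)` can reach a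
configuration `B + D_a` that is `(1/k)`-concentrated in `S`, for some basis element `(B,S)` of
the stable configurations with `‖B‖∞ ≤ β` and some `D_a ∈ ℕ^S`. -/
theorem reach_concentrated {Q : Type} [DecidableEq Q] [Fintype Q]
    (P : PopulationProtocol Q Unit) (hL : P.L = 0) (n : ℕ) (hn : Fintype.card Q = n)
    (φ : ℕ → Bool) (hcomp : P.Computes fun v => φ (v ()))
    (k : ℕ) (hk : 1 ≤ k) (a : ℕ)
    (ha : a = k * n * 2 ^ (2 * (2 * n + 1).factorial + 1))
    (D : Multiset Q) (hD : P.Reach (P.IC fun _ => a) D) :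
    ∃ B : Multiset Q, ∃ S : Finset Q, ∃ Da : Multiset Q,
      IsBasisElement P.StableSet B S ∧
      normInf B ≤ 2 ^ (2 * (2 * n + 1).factorial + 1) ∧
      (∀ q ∈ Da, q ∈ S) ∧
      P.Reach D (B + Da) ∧
      ConcInv k S (B + Da) := by
    classical
  set β := 2 ^ (2 * (2 * n + 1).factorial + 1) with hβ
  have hn1 : 1 ≤ n := by
    rw [← hn]
    have : Nonempty Q := ⟨P.I ()⟩
    exact Fintype.card_pos
  have hβ2 : 2 ≤ β := by
    rw [hβ]
    calc 2 = 2 ^ 1 := by norm_num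
      _ ≤ 2 ^ (2 * (2 * n + 1).factorial + 1) := Nat.pow_le_pow_right (by norm_num) (by omega)
  have ha2 : 2 ≤ a := by
    rw [ha]
    calc 2 ≤ β := hβ2
      _ = 1 * 1 * β := by ring
      _ ≤ k * n * β := Nat.mul_le_mul (Nat.mul_le_mul hk hn1) le_rfl
  have hICcard : Multiset.card (P.IC fun _ => a) = a := by
    rw [PopulationProtocol.IC, hL]
    simp
  obtain ⟨σ, Cstar, h0, hex, hfair, hDCstar, hhit⟩ :=
    exists_fair_exec P (by rw [hICcard]; exact ha2) hD
  have hsum : 2 ≤ ∑ _x : Unit, a := by simpa using ha2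
  obtain ⟨N, hN⟩ := hcomp (fun _ => a) hsum σ hex hfair h0
  have hCstarCard : Multiset.card Cstar = a := by
    rw [reach_card (Relation.ReflTransGen.trans hD hDCstar), hICcard]
  have hstable : P.Stable (φ a) Cstar := by
    constructor
    · show 2 ≤ Multiset.card Cstar
      omega
    · intro C' hC' q hq
      obtain ⟨i, hiN, hieq⟩ := hhit C' hC' N
      have hout := hN i hiN
      rw [hieq] at hout
      exact hout q hq
  set S : Finset Q := Finset.univ.filter (fun q => β < Multiset.count q Cstar) with hS
  set B : Multiset Q :=
    ∑ q ∈ Finset.univ, Multiset.replicate (min (Multiset.count q Cstar) β) q with hB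
  have hcB : ∀ p, Multiset.count p B = min (Multiset.count p Cstar) β := by
    intro p; rw [hB]; exact count_sum_repl _ p
  have hBle : B ≤ Cstar :=
    Multiset.le_iff_count.mpr (fun q => by rw [hcB q]; exact min_le_left _ _)
  set Da : Multiset Q := Cstar - B with hDa
  have hBDa : B + Da = Cstar := by
    rw [hDa]
    exact add_tsub_cancel_of_le hBle
  have hfRβ : 2 * fR (Fintype.card Q) + 1 ≤ β := by
    rw [hn, hβ]
    exact fR_final_bound n
  have hstableBE : ∀ E : Multiset Q, (∀ q ∈ E, q ∈ S) → P.Stable (φ a) (B + E) := by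
    intro E hE
    constructor
    · show 2 ≤ Multiset.card (B + E)
      rw [Multiset.card_add]
      by_cases hall : ∀ q, Multiset.count q Cstar ≤ β
      · have hBC : B = Cstar :=
          Multiset.ext.mpr (fun q => by rw [hcB q]; exact min_eq_left (hall q))
        rw [hBC]
        omega
      · push_neg at hall
        obtain ⟨q, hq⟩ := hall
        have hqB : Multiset.count q B = β := by rw [hcB q]; omega
        have hcard := Multiset.count_le_card q B
        omega
    · intro C'' hC'' q₀ hq₀
      by_contra hne
      have hcov : Covers P (B + E) q₀ := ⟨C'', hC'', hq₀⟩
      obtain ⟨m, hmle, hmsmall, hmcov⟩ := covers_small P hcov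
      have hmC : m ≤ Cstar := by
        rw [Multiset.le_iff_count]
        intro q
        have h1 := Multiset.le_iff_count.mp hmle q
        rw [Multiset.count_add, hcB q] at h1
        have h2 := hmsmall q
        by_cases hqS : q ∈ S
        · have h3 : β < Multiset.count q Cstar := by
            rw [hS] at hqS
            simpa using hqS
          omega
        · have hEq : Multiset.count q E = 0 := by
            rw [Multiset.count_eq_zero]
            intro hmem
            exact hqS (hE q hmem)
          omega
      obtain ⟨Z, hZ, hq₀Z⟩ := covers_mono hmC hmcov
      exact hne (hstable.2 Z hZ q₀ hq₀Z)
  refine ⟨B, S, Da, ?_, ?_, ?_, ?_, ?_⟩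
  · intro E hE
    have hst := hstableBE E hE
    cases hφ : φ a with
    | false => exact Or.inl (hφ ▸ hst)
    | true => exact Or.inr (hφ ▸ hst)
  · rw [PopulationProtocol.normInf]
    apply Finset.sup_le
    intro q _
    rw [hcB q]
    exact min_le_right _ _
  · intro q hq
    rw [hS]
    simp only [Finset.mem_filter, Finset.mem_univ, true_and]
    have hpos : 0 < Multiset.count q Da := Multiset.count_pos.mpr hq
    rw [hDa, Multiset.count_sub, hcB q] at hpos
    omega
  · rw [hBDa]; exact hDCstar
  · rw [hBDa, PopulationProtocol.ConcInv]
    have hfil : Multiset.card (Multiset.filter (fun q => q ∉ S) Cstar) ≤ n * β := by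
      rw [card_eq_sum_count]
      have hb : ∀ q ∈ Finset.univ,
          Multiset.count q (Multiset.filter (fun q => q ∉ S) Cstar) ≤ β := by
        intro q _
        rw [Multiset.count_filter]
        split
        · next hqS =>
            have hnot : ¬ β < Multiset.count q Cstar := by
              intro hlt
              exact hqS (by rw [hS]; simp [hlt])
            omega
        · omega
      calc ∑ q ∈ Finset.univ, Multiset.count q (Multiset.filter (fun q => q ∉ S) Cstar)
          ≤ ∑ _q ∈ (Finset.univ : Finset Q), β := Finset.sum_le_sum hb
        _ = n * β := by rw [Finset.sum_const, Finset.card_univ, hn, smul_eq_mul]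
    calc k * Multiset.card (Multiset.filter (fun q => q ∉ S) Cstar)
        ≤ k * (n * β) := Nat.mul_le_mul_left _ hfil
      _ = a := by rw [ha, hβ]; ring
    · exact hCstarCard ▸ le_rfl
end
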